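/- arXiv:math/0509265 — 4 statements merged into one kernel-verified Lean document; each statement's English description precedes it below -/
import Mathlib

section
/- In the poset (set partitions of [n], ≤_*), the number of elements covered by a set partition A equals n - ℓ(A). -/
open scoped Classical
noncomputable section

/-- The ground set `[n] = {1, …, n}`. -/
def ground (n : ℕ) : Finset ℕ := Finset.Icc 1 n

/-- `A` is a set partition of `[n]`. -/
def IsSetPartition (n : ℕ) (A : Finset (Finset ℕ)) : Prop :=
  (∀ B ∈ A, B.Nonempty) ∧
  (∀ B ∈ A, ∀ C ∈ A, B ≠ C → Disjoint B C) ∧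
  A.sup id = ground n

/-- Shift every entry of every part by `n`. -/
def shiftP (n : ℕ) (A : Finset (Finset ℕ)) : Finset (Finset ℕ) :=
  A.image (fun B => B.image (· + n))

/-- Shifted concatenation `A|B` of a set partition `A ⊢ [n]` with `B`. -/
def concatP (n : ℕ) (A B : Finset (Finset ℕ)) : Finset (Finset ℕ) :=
  A ∪ shiftP n B

/-- `A` is an atomic set partition of `[n]`: nonempty and not a nontrivial
shifted concatenation. -/
def AtomicP (n : ℕ) (A : Finset (Finset ℕ)) : Prop :=
  IsSetPartition n A ∧ 0 < n ∧
  ¬ ∃ k B C, 0 < k ∧ k < n ∧ IsSetPartition k B ∧ IsSetPartition (n - k) C ∧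
      A = concatP k B C

/-- Shifted concatenation of a list of (size, set partition) pairs. -/
def concatListP : List (ℕ × Finset (Finset ℕ)) → ℕ × Finset (Finset ℕ)
  | [] => (0, ∅)
  | p :: L => ((concatListP L).1 + p.1, concatP p.1 p.2 (concatListP L).2)

/-- `L` is the atomic factorization `A^!` of the set partition `A ⊢ [n]`. -/
def AtomicFactorization (n : ℕ) (A : Finset (Finset ℕ))
    (L : List (ℕ × Finset (Finset ℕ))) : Prop :=
  (∀ p ∈ L, AtomicP p.1 p.2) ∧ concatListP L = (n, A)

/-- The Bell number: the number of set partitions of `[n]`. -/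
def bell (n : ℕ) : ℕ := Nat.card {A : Finset (Finset ℕ) // IsSetPartition n A}

/-- Stirling numbers of the second kind: set partitions of `[n]` into `k` parts. -/
def stirling2 (n k : ℕ) : ℕ :=
  Nat.card {A : Finset (Finset ℕ) // IsSetPartition n A ∧ A.card = k}

/-- The number of atomic set partitions of `[n]` into `k` parts. -/
def atomCount (n k : ℕ) : ℕ :=
  Nat.card {A : Finset (Finset ℕ) // AtomicP n A ∧ A.card = k}

/-- The number of atomic set partitions of `[n]`. -/
def atomCount' (n : ℕ) : ℕ := Nat.card {A : Finset (Finset ℕ) // AtomicP n A}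

/-- Refinement order: `A ≤ B` iff every part of `A` is contained in a part of `B`. -/
def refines (A B : Finset (Finset ℕ)) : Prop := ∀ a ∈ A, ∃ b ∈ B, a ⊆ b

/-- The meet `A ∧ B` of two set partitions. -/
def meetP (A B : Finset (Finset ℕ)) : Finset (Finset ℕ) :=
  ((A ×ˢ B).image fun p => p.1 ∩ p.2).filter (·.Nonempty)

/-- The set partition `{[n]}` with a single part (empty if `n = 0`). -/
def onePartP (n : ℕ) : Finset (Finset ℕ) := if n = 0 then ∅ else {ground n}

/-- The finite set of set partitions of `[n]` satisfying a predicate `P`. -/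
def SPs (n : ℕ) (P : Finset (Finset ℕ) → Prop) : Finset (Finset (Finset ℕ)) :=
  (ground n).powerset.powerset.filter fun A => IsSetPartition n A ∧ P A

/-- Covering relation for `≤_*`: `B` covers `A` if `B` is obtained from `A` by merging two
parts `a, a'` with every element of `a` smaller than every element of `a'`. -/
def coverStar (A B : Finset (Finset ℕ)) : Prop :=
  ∃ a ∈ A, ∃ a' ∈ A, a ≠ a' ∧ (∀ x ∈ a, ∀ y ∈ a', x < y) ∧
    B = insert (a ∪ a') ((A.erase a).erase a')

/-- The order `≤_*` on set partitions. -/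
def leStar : Finset (Finset ℕ) → Finset (Finset ℕ) → Prop :=
  Relation.ReflTransGen coverStar

/-- Restriction `A↓_S` of a set partition to the entries in `S`. -/
def restrictP (A : Finset (Finset ℕ)) (S : Finset ℕ) : Finset (Finset ℕ) :=
  (A.image (· ∩ S)).filter (·.Nonempty)

/-- The standardization map of a finite set `S`: sends the `i`-th smallest element of `S`
to `i` (1-indexed). -/
def stMap (S : Finset ℕ) (x : ℕ) : ℕ := (S.filter (· ≤ x)).card

/-- Standardization of a set partition: relabel its entries to `{1,…,m}` preserving order. -/
def stdP (A : Finset (Finset ℕ)) : Finset (Finset ℕ) :=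
  A.image fun b => b.image (stMap (A.sup id))

/-- The map raising `{1,…,|S|}` order-preservingly onto `S`. -/
def raiseMap (S : Finset ℕ) (x : ℕ) : ℕ := (S.sort (· ≤ ·)).getD (x - 1) 0

/-- `A↑_S`: raise the entries of `A` order-preservingly so the ground set becomes `S`. -/
def raiseP (S : Finset ℕ) (A : Finset (Finset ℕ)) : Finset (Finset ℕ) :=
  A.image fun b => b.image (raiseMap S)

/-- `IsShuffle l₁ l₂ l`: `l` is a shuffle (interleaving) of `l₁` and `l₂`. -/
inductive IsShuffle {α : Type*} : List α → List α → List α → Prop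
  | nil : IsShuffle [] [] []
  | left {a : α} {l₁ l₂ l : List α} : IsShuffle l₁ l₂ l → IsShuffle (a :: l₁) l₂ (a :: l)
  | right {a : α} {l₁ l₂ l : List α} : IsShuffle l₁ l₂ l → IsShuffle l₁ (a :: l₂) (a :: l)

/-- A word is Lyndon if it is nonempty and lexicographically strictly smaller than all of
its proper cyclic rotations. -/
def LyndonWord {α : Type*} (lt : α → α → Prop) (w : List α) : Prop :=
  w ≠ [] ∧ ∀ i, 0 < i → i < w.length → List.Lex lt w (w.rotate i)

/-- A set partition is Lyndon (with respect to a total order `lt` on atomic set partitions)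
if its atomic factorization is a Lyndon word. -/
def LyndonPartition (lt : ℕ × Finset (Finset ℕ) → ℕ × Finset (Finset ℕ) → Prop)
    (n : ℕ) (A : Finset (Finset ℕ)) : Prop :=
  ∃ L, AtomicFactorization n A L ∧ LyndonWord lt L

/-! ### Set compositions -/

/-- `Φ` is a set composition of `[n]`: an ordered sequence of nonempty pairwise disjoint
sets whose union is `[n]`. -/
def IsSetComposition (n : ℕ) (Φ : List (Finset ℕ)) : Prop :=
  (∀ B ∈ Φ, B.Nonempty) ∧ Φ.Pairwise Disjoint ∧ Φ.foldr (· ∪ ·) ∅ = ground n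

/-- Shift every entry of every part of a set composition by `n`. -/
def shiftC (n : ℕ) (Φ : List (Finset ℕ)) : List (Finset ℕ) :=
  Φ.map (·.image (· + n))

/-- Shifted concatenation `Φ|Ψ` of set compositions, `Φ ⊨ [n]`. -/
def concatC (n : ℕ) (Φ Ψ : List (Finset ℕ)) : List (Finset ℕ) := Φ ++ shiftC n Ψ

/-- An atomic set composition: nonempty and not a nontrivial shifted concatenation. -/
def AtomicC (n : ℕ) (Φ : List (Finset ℕ)) : Prop :=
  IsSetComposition n Φ ∧ 0 < n ∧
  ¬ ∃ k Ψ Γ, 0 < k ∧ k < n ∧ IsSetComposition k Ψ ∧ IsSetComposition (n - k) Γ ∧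
      Φ = concatC k Ψ Γ

/-- Shifted concatenation of a list of (size, set composition) pairs. -/
def concatListC : List (ℕ × List (Finset ℕ)) → ℕ × List (Finset ℕ)
  | [] => (0, [])
  | p :: L => ((concatListC L).1 + p.1, concatC p.1 p.2 (concatListC L).2)

/-- `L` is the atomic factorization `Φ^!` of the set composition `Φ ⊨ [n]`. -/
def AtomicFactorizationC (n : ℕ) (Φ : List (Finset ℕ))
    (L : List (ℕ × List (Finset ℕ))) : Prop :=
  (∀ p ∈ L, AtomicC p.1 p.2) ∧ concatListC L = (n, Φ)

/-- Covering relation for `≤_*` on set compositions: merge two adjacent parts `a, b` with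
every element of `a` smaller than every element of `b`. -/
def coverStarC (Φ Ψ : List (Finset ℕ)) : Prop :=
  ∃ L₁ a b L₂, Φ = L₁ ++ a :: b :: L₂ ∧ (∀ x ∈ a, ∀ y ∈ b, x < y) ∧
    Ψ = L₁ ++ (a ∪ b) :: L₂

/-- The order `≤_*` on set compositions. -/
def leStarC : List (Finset ℕ) → List (Finset ℕ) → Prop :=
  Relation.ReflTransGen coverStarC

/-- The meet operation `Φ ∧ Ψ` on set compositions: the nonempty intersections
`Φ_i ∩ Ψ_j` in lexicographic order of `(i, j)`. -/
def meetC (Φ Ψ : List (Finset ℕ)) : List (Finset ℕ) :=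
  (Φ.flatMap fun a => Ψ.map fun b => a ∩ b).filter (·.Nonempty)

/-- The one-part set composition `([n])` (empty if `n = 0`). -/
def onePartC (n : ℕ) : List (Finset ℕ) := if n = 0 then [] else [ground n]

/-- Lists of length `k` with all entries in `s`. -/
def listsOfLen (s : Finset (Finset ℕ)) : ℕ → Finset (List (Finset ℕ))
  | 0 => {[]}
  | k + 1 => (s ×ˢ listsOfLen s k).image fun p => p.1 :: p.2

/-- The finite set of set compositions of `[n]` satisfying a predicate `P`. -/
def SCs (n : ℕ) (P : List (Finset ℕ) → Prop) : Finset (List (Finset ℕ)) :=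
  ((Finset.range (n + 1)).biUnion fun k => listsOfLen (ground n).powerset k).filter
    fun Φ => IsSetComposition n Φ ∧ P Φ

/-- `Φ↑_S`: raise the entries of a set composition order-preservingly into `S`. -/
def raiseC (S : Finset ℕ) (Φ : List (Finset ℕ)) : List (Finset ℕ) :=
  Φ.map (·.image (raiseMap S))

/-- Standardization of a set composition. -/
def stdC (Φ : List (Finset ℕ)) : List (Finset ℕ) :=
  Φ.map (·.image (stMap (Φ.foldr (· ∪ ·) ∅)))

/-- `α(Φ)`: the composition of part sizes of `Φ`. -/
def alphaC (Φ : List (Finset ℕ)) : List ℕ := Φ.map Finset.card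

/-- The order `≤_#` on set compositions: `Φ ≤_# Ψ` iff `α(Φ) = α(Ψ)` and each atomic factor
of `Φ` is the standardization of the corresponding consecutive block of parts of `Ψ`. -/
def leSharp (Φ Ψ : List (Finset ℕ)) : Prop :=
  alphaC Φ = alphaC Ψ ∧
  ∃ (L : List (ℕ × List (Finset ℕ))) (Bs : List (List (Finset ℕ))),
    (∀ p ∈ L, AtomicC p.1 p.2) ∧ (concatListC L).2 = Φ ∧
    Ψ = Bs.flatten ∧ List.Forall₂ (fun b (l : ℕ × List (Finset ℕ)) => stdC b = l.2) Bs L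

/-! ### Index types -/

/-- Set partitions with their sizes. -/
abbrev SPIdx := {x : ℕ × Finset (Finset ℕ) // IsSetPartition x.1 x.2}

/-- Atomic set partitions with their sizes. -/
abbrev AtomIdx := {x : ℕ × Finset (Finset ℕ) // AtomicP x.1 x.2}

/-- Set compositions with their sizes. -/
abbrev SCIdx := {x : ℕ × List (Finset ℕ) // IsSetComposition x.1 x.2}

/-- Atomic set compositions with their sizes. -/
abbrev AtomCIdx := {x : ℕ × List (Finset ℕ) // AtomicC x.1 x.2}

/-! A partition covered by `A` arises by cutting one part `a` of `A` into its elements `≤ t`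
and its elements `> t`, for some `t ∈ a` other than `max a`; different cuts give different
partitions. So the covered partitions are counted by the pairs `(a, t)`, and there are
`∑ a ∈ A, (|a| - 1) = n - ℓ(A)` of these. -/

namespace Finset

variable {α : Type*} [LinearOrder α] {a : Finset α} {t : α}

theorem sup_id_mem_of_nonempty [OrderBot α] (h : a.Nonempty) : a.sup id ∈ a := by
  obtain ⟨x, hx, hsup⟩ := a.exists_mem_eq_sup h id
  exact hsup ▸ hx

theorem card_filter_lt_sup_id [OrderBot α] (h : a.Nonempty) :
    (a.filter (· < a.sup id)).card = a.card - 1 := by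
  have herase : a.filter (· < a.sup id) = a.erase (a.sup id) := by
    ext x
    simp only [mem_filter, mem_erase]
    exact ⟨fun ⟨hx, hlt⟩ => ⟨hlt.ne, hx⟩,
      fun ⟨hne, hx⟩ => ⟨hx, lt_of_le_of_ne (le_sup (f := id) hx) hne⟩⟩
  rw [herase, card_erase_of_mem (sup_id_mem_of_nonempty h)]

theorem filter_union_le_eq_left {c c' : Finset α} (hc : ∀ x ∈ c, x ≤ t)
    (hc' : ∀ y ∈ c', t < y) : (c ∪ c').filter (· ≤ t) = c := by
  rw [filter_union, filter_true_of_mem hc,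
    filter_false_of_mem fun y hy => not_le.2 (hc' y hy), union_empty]

theorem filter_union_lt_eq_right {c c' : Finset α} (hc : ∀ x ∈ c, x ≤ t)
    (hc' : ∀ y ∈ c', t < y) : (c ∪ c').filter (t < ·) = c' := by
  rw [filter_union, filter_false_of_mem fun x hx => not_lt.2 (hc x hx),
    filter_true_of_mem hc', empty_union]

theorem filter_le_ssubset [OrderBot α] (hlt : t < a.sup id) : a.filter (· ≤ t) ⊂ a := by
  obtain ⟨y, hy, hty⟩ := Finset.lt_sup_iff.1 hlt
  exact (filter_subset _ _).ssubset_of_not_subset fun h => (mem_filter.1 (h hy)).2.not_gt hty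

theorem filter_lt_ssubset (ht : t ∈ a) : a.filter (t < ·) ⊂ a :=
  (filter_subset _ _).ssubset_of_not_subset fun h => (mem_filter.1 (h ht)).2.false

theorem filter_le_nonempty (ht : t ∈ a) : (a.filter (· ≤ t)).Nonempty :=
  ⟨t, mem_filter.2 ⟨ht, le_rfl⟩⟩

theorem filter_lt_nonempty [OrderBot α] (hlt : t < a.sup id) : (a.filter (t < ·)).Nonempty := by
  obtain ⟨y, hy, hty⟩ := Finset.lt_sup_iff.1 hlt
  exact ⟨y, mem_filter.2 ⟨hy, hty⟩⟩

theorem filter_le_union_filter_lt : a.filter (· ≤ t) ∪ a.filter (t < ·) = a := by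
  ext x
  simp only [mem_union, mem_filter, ← and_or_left, and_iff_left_iff_imp]
  exact fun _ => le_or_gt x t

theorem disjoint_filter_le_filter_lt : Disjoint (a.filter (· ≤ t)) (a.filter (t < ·)) :=
  disjoint_filter.2 fun _ _ hle hlt => hle.not_gt hlt

theorem notMem_of_ssubset_of_pairwiseDisjoint {β : Type*} {A : Finset (Finset β)}
    (hA : (A : Set (Finset β)).PairwiseDisjoint id) {b s : Finset β} (hb : b ∈ A)
    (hs : s ⊂ b) (hne : s.Nonempty) : s ∉ A := by
  obtain ⟨x, hx⟩ := hne
  exact fun hsA => hs.ne (hA.elim_finset hsA hb x hx (hs.subset hx))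

end Finset

theorem IsSetPartition.pairwiseDisjoint {n : ℕ} {A : Finset (Finset ℕ)}
    (hA : IsSetPartition n A) : (A : Set (Finset ℕ)).PairwiseDisjoint id :=
  fun _ hB _ hC hBC => hA.2.1 _ hB _ hC hBC

theorem IsSetPartition.sum_card {n : ℕ} {A : Finset (Finset ℕ)} (hA : IsSetPartition n A) :
    ∑ a ∈ A, a.card = n := by
  have hunion : A.biUnion id = ground n := by rw [← Finset.sup_eq_biUnion, hA.2.2]
  have hcard := Finset.card_biUnion hA.pairwiseDisjoint (t := id)
  rw [hunion, ground, Nat.card_Icc, Nat.add_sub_cancel] at hcard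
  exact hcard.symm

def splitPart (A : Finset (Finset ℕ)) (a : Finset ℕ) (t : ℕ) : Finset (Finset ℕ) :=
  insert (a.filter (· ≤ t)) (insert (a.filter (t < ·)) (A.erase a))

def cutPoints (A : Finset (Finset ℕ)) : Finset (Σ _ : Finset ℕ, ℕ) :=
  A.sigma fun a => a.filter (· < a.sup id)

theorem mem_cutPoints {A : Finset (Finset ℕ)} {p : Σ _ : Finset ℕ, ℕ} :
    p ∈ cutPoints A ↔ p.1 ∈ A ∧ p.2 ∈ p.1 ∧ p.2 < p.1.sup id := by
  simp only [cutPoints, Finset.mem_sigma, Finset.mem_filter]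

theorem card_cutPoints {n : ℕ} {A : Finset (Finset ℕ)} (hA : IsSetPartition n A) :
    (cutPoints A).card = n - A.card := by
  rw [cutPoints, Finset.card_sigma, Finset.sum_congr rfl fun a ha =>
      Finset.card_filter_lt_sup_id (hA.1 a ha),
    Finset.sum_tsub_distrib _ fun a ha => Finset.one_le_card.2 (hA.1 a ha), hA.sum_card,
    Finset.card_eq_sum_ones]

section SplitPart

variable {A : Finset (Finset ℕ)} {a : Finset ℕ} {t : ℕ}

theorem pairwiseDisjoint_splitPart (hA : (A : Set (Finset ℕ)).PairwiseDisjoint id)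
    (ha : a ∈ A) : (splitPart A a t : Set (Finset ℕ)).PairwiseDisjoint id := by
  have hrest := hA.subset (Finset.coe_subset.2 (A.erase_subset a))
  have hpiece : ∀ s ⊆ a, ∀ b ∈ A.erase a, Disjoint s b := fun s hs b hb =>
    (hA ha (Finset.mem_of_mem_erase hb) (Finset.ne_of_mem_erase hb).symm).mono_left hs
  rw [splitPart, Finset.coe_insert, Finset.coe_insert]
  refine (hrest.insert fun b hb _ => hpiece _ (Finset.filter_subset _ _) b hb).insert ?_
  rintro b (rfl | hb) -
  · exact Finset.disjoint_filter_le_filter_lt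
  · exact hpiece _ (Finset.filter_subset _ _) b hb

theorem sup_splitPart (ha : a ∈ A) : (splitPart A a t).sup id = A.sup id := by
  conv_rhs => rw [← Finset.insert_erase ha]
  rw [splitPart, Finset.sup_insert, Finset.sup_insert, Finset.sup_insert, ← sup_assoc]
  exact congrArg (· ⊔ _) Finset.filter_le_union_filter_lt

theorem IsSetPartition.splitPart {n : ℕ} (hA : IsSetPartition n A) (ha : a ∈ A) (ht : t ∈ a)
    (hlt : t < a.sup id) : IsSetPartition n (splitPart A a t) := by
  refine ⟨?_, fun B hB C hC => pairwiseDisjoint_splitPart hA.pairwiseDisjoint ha hB hC,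
    (sup_splitPart ha).trans hA.2.2⟩
  intro B hB
  simp only [_root_.splitPart, Finset.mem_insert] at hB
  obtain rfl | rfl | hB := hB
  · exact Finset.filter_le_nonempty ht
  · exact Finset.filter_lt_nonempty hlt
  · exact hA.1 B (Finset.mem_of_mem_erase hB)

theorem coverStar_splitPart (hA : (A : Set (Finset ℕ)).PairwiseDisjoint id) (ha : a ∈ A)
    (ht : t ∈ a) (hlt : t < a.sup id) : coverStar (splitPart A a t) A := by
  have hlow : a.filter (· ≤ t) ∉ A.erase a := fun h =>
    Finset.notMem_of_ssubset_of_pairwiseDisjoint hA ha (Finset.filter_le_ssubset hlt)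
      (Finset.filter_le_nonempty ht) (Finset.mem_of_mem_erase h)
  have hup : a.filter (t < ·) ∉ A.erase a := fun h =>
    Finset.notMem_of_ssubset_of_pairwiseDisjoint hA ha (Finset.filter_lt_ssubset ht)
      (Finset.filter_lt_nonempty hlt) (Finset.mem_of_mem_erase h)
  have hne : a.filter (· ≤ t) ≠ a.filter (t < ·) := fun h =>
    (Finset.filter_le_nonempty ht).ne_empty
      (disjoint_self.1 (h ▸ Finset.disjoint_filter_le_filter_lt (a := a) (t := t)))
  refine ⟨_, Finset.mem_insert_self _ _, _,
    Finset.mem_insert_of_mem (Finset.mem_insert_self _ _), hne, fun x hx y hy => ?_, ?_⟩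
  · exact (Finset.mem_filter.1 hx).2.trans_lt (Finset.mem_filter.1 hy).2
  · rw [splitPart, Finset.erase_insert (by simpa [hne] using hlow), Finset.erase_insert hup,
      Finset.filter_le_union_filter_lt, Finset.insert_erase ha]

theorem notMem_splitPart (ht : t ∈ a) (hlt : t < a.sup id) : a ∉ splitPart A a t := by
  simp only [splitPart, Finset.mem_insert, Finset.mem_erase, not_or]
  exact ⟨(Finset.filter_le_ssubset hlt).ne.symm, (Finset.filter_lt_ssubset ht).ne.symm, fun h => h.1 rfl⟩

theorem mem_splitPart_of_ne {b : Finset ℕ} (hb : b ∈ A) (hba : b ≠ a) : b ∈ splitPart A a t :=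
  Finset.mem_insert_of_mem (Finset.mem_insert_of_mem (Finset.mem_erase.2 ⟨hba, hb⟩))

theorem splitPart_injOn (hA : (A : Set (Finset ℕ)).PairwiseDisjoint id) :
    Set.InjOn (fun p : Σ _ : Finset ℕ, ℕ => splitPart A p.1 p.2) (cutPoints A) := by
  rintro ⟨a, t⟩ hp ⟨b, s⟩ hq (heq : splitPart A a t = splitPart A b s)
  obtain ⟨ha, ht, htlt⟩ := mem_cutPoints.1 hp
  obtain ⟨hb, hs, hslt⟩ := mem_cutPoints.1 hq
  obtain rfl : a = b := by
    by_contra hab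
    have h := mem_splitPart_of_ne (t := s) ha hab
    rw [← heq] at h
    exact notMem_splitPart ht htlt h
  -- The lower piece of the cut at `t` is a part of the cut at `s` containing `t`, and only
  -- one such part exists.
  have hdisj := pairwiseDisjoint_splitPart (t := s) hA ha
  have hlow : a.filter (· ≤ t) ∈ splitPart A a s := heq ▸ Finset.mem_insert_self _ _
  have htlow : t ∈ a.filter (· ≤ t) := Finset.mem_filter.2 ⟨ht, le_rfl⟩
  obtain hts | hst := le_or_gt t s
  · have h : a.filter (· ≤ t) = a.filter (· ≤ s) := hdisj.elim_finset hlow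
      (Finset.mem_insert_self _ _) t htlow (Finset.mem_filter.2 ⟨ht, hts⟩)
    have hs_low : s ∈ a.filter (· ≤ t) := h ▸ Finset.mem_filter.2 ⟨hs, le_rfl⟩
    rw [le_antisymm hts (Finset.mem_filter.1 hs_low).2]
  · have h : a.filter (· ≤ t) = a.filter (s < ·) := hdisj.elim_finset hlow
      (Finset.mem_insert_of_mem (Finset.mem_insert_self _ _)) t htlow
      (Finset.mem_filter.2 ⟨ht, hst⟩)
    have hs_up : s ∈ a.filter (s < ·) := h ▸ Finset.mem_filter.2 ⟨hs, hst.le⟩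
    exact absurd (Finset.mem_filter.1 hs_up).2 (lt_irrefl s)

theorem exists_mem_cutPoints_of_coverStar {C : Finset (Finset ℕ)} (hne : ∀ B ∈ C, B.Nonempty)
    (hC : (C : Set (Finset ℕ)).PairwiseDisjoint id) (hCA : coverStar C A) :
    ∃ p ∈ cutPoints A, splitPart A p.1 p.2 = C := by
  obtain ⟨c, hc, c', hc', hcc', hlt, rfl⟩ := hCA
  set t := c.max' (hne c hc)
  have htc : t ∈ c := c.max'_mem _
  have hle : ∀ x ∈ c, x ≤ t := fun x hx => c.le_max' x hx
  have hgt : ∀ y ∈ c', t < y := hlt t htc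
  have hrest : c ∪ c' ∉ (C.erase c).erase c' := fun h =>
    (hne c hc).ne_empty <| disjoint_self.1 <|
      (hC hc (Finset.mem_of_mem_erase (Finset.mem_of_mem_erase h))
        (Finset.ne_of_mem_erase (Finset.mem_of_mem_erase h)).symm).mono_right
        Finset.subset_union_left
  obtain ⟨y, hy⟩ := hne c' hc'
  refine ⟨⟨c ∪ c', t⟩, mem_cutPoints.2 ⟨Finset.mem_insert_self _ _,
    Finset.mem_union_left _ htc, Finset.lt_sup_iff.2 ⟨y, Finset.mem_union_right _ hy, hgt y hy⟩⟩, ?_⟩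
  rw [splitPart, Finset.filter_union_le_eq_left hle hgt, Finset.filter_union_lt_eq_right hle hgt,
    Finset.erase_insert hrest, Finset.insert_erase (Finset.mem_erase.2 ⟨hcc'.symm, hc'⟩),
    Finset.insert_erase hc]

end SplitPart

/-- in the poset `(set partitions of [n], ≤_*)`, the number of elements
covered by a set partition `A` is `n - ℓ(A)`. -/
theorem card_covered_starOrder (n : ℕ) (A : Finset (Finset ℕ)) (hA : IsSetPartition n A) :
    Nat.card {C : Finset (Finset ℕ) // IsSetPartition n C ∧ coverStar C A} = n - A.card := by
  have hcovered : {C | IsSetPartition n C ∧ coverStar C A} =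
      ((cutPoints A).image fun p => splitPart A p.1 p.2 : Set (Finset (Finset ℕ))) := by
    ext C
    simp only [Set.mem_ofPred_eq, Finset.coe_image, Set.mem_image, Finset.mem_coe]
    constructor
    · rintro ⟨hC, hCA⟩
      exact exists_mem_cutPoints_of_coverStar hC.1 hC.pairwiseDisjoint hCA
    · rintro ⟨p, hp, rfl⟩
      obtain ⟨ha, ht, hlt⟩ := mem_cutPoints.1 hp
      exact ⟨hA.splitPart ha ht hlt, coverStar_splitPart hA.pairwiseDisjoint ha ht hlt⟩
  rw [← Set.coe_ofPred, hcovered, Nat.card_coe_set_eq, Set.ncard_coe_finset,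
    Finset.card_image_of_injOn (splitPart_injOn hA.pairwiseDisjoint), card_cutPoints hA]
end
end

section
/- In NCSym, the basis q_A = \sum_{B ≥_* A} m_B is multiplicative with respect to atomic factorization: if A^! = (A^{(1)},...,A^{(k)}) then q_A = q_{A^{(1)}} q_{A^{(2)}} ··· q_{A^{(k)}}; consequently NCSym is freely generated by {q_A : A atomic}. -/
open scoped Classical
noncomputable section

/-!
Write `C↓` for the restriction of a set partition `C ⊢ [n+k]` to `[n]` and `C↑` for its
standardized restriction to `{n+1, …, n+k}`, so that `C ∧ ({[n]} | {[k]}) = C↓ | C↑`.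
Pushing covers forward along both restrictions, and splitting one at a time the blocks of `C`
that meet both halves, shows `A | B ≤_* C ↔ A ≤_* C↓ ∧ B ≤_* C↑`. Summing the product rule
`m_{A'} m_{B'} = ∑_{C↓ = A', C↑ = B'} m_C` over `A' ≥_* A`, `B' ≥_* B` therefore gives
`q_A q_B = q_{A|B}`, and multiplicativity along `A^!` follows.

A strict `≤_*`-step lowers the number of blocks, so `q_A = m_A + (terms with fewer blocks)`:
the `q`'s are unitriangular in the `m`'s, hence a basis. Atomic factorizations exist and are
unique, so words in atomic partitions correspond to set partitions, and the free algebra on the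
atoms maps its word basis onto the `q` basis.
-/

open Finset

lemma mem_ground {n x : ℕ} : x ∈ ground n ↔ 1 ≤ x ∧ x ≤ n := mem_Icc

lemma ground_zero : ground 0 = ∅ := Icc_eq_empty (by omega)

lemma ground_mono {n n' : ℕ} (h : n ≤ n') : ground n ⊆ ground n' :=
  Icc_subset_Icc_right h

lemma isSetPartition_zero_empty : IsSetPartition 0 ∅ := by
  simp [IsSetPartition, ground_zero]

namespace IsSetPartition

variable {n : ℕ} {A : Finset (Finset ℕ)}

lemma of_subset_of_cover (hne : ∀ b ∈ A, b.Nonempty)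
    (hdisj : ∀ b ∈ A, ∀ c ∈ A, b ≠ c → Disjoint b c) (hsub : ∀ b ∈ A, b ⊆ ground n)
    (hcov : ∀ x ∈ ground n, ∃ b ∈ A, x ∈ b) : IsSetPartition n A := by
  refine ⟨hne, hdisj, le_antisymm (Finset.sup_le hsub) fun x hx => ?_⟩
  obtain ⟨b, hb, hxb⟩ := hcov x hx
  exact mem_sup.mpr ⟨b, hb, hxb⟩

lemma subset_ground (hA : IsSetPartition n A) {b : Finset ℕ} (hb : b ∈ A) : b ⊆ ground n := by
  simpa [hA.2.2] using le_sup (f := id) hb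

lemma one_le (hA : IsSetPartition n A) {b : Finset ℕ} (hb : b ∈ A) {x : ℕ} (hx : x ∈ b) :
    1 ≤ x :=
  (mem_ground.mp (hA.subset_ground hb hx)).1

lemma exists_mem (hA : IsSetPartition n A) {x : ℕ} (hx : x ∈ ground n) : ∃ b ∈ A, x ∈ b := by
  rw [← hA.2.2] at hx
  simpa using mem_sup.mp hx

lemma eq_empty_of_zero (hA : IsSetPartition 0 A) : A = ∅ :=
  eq_empty_of_forall_notMem fun b hb => (hA.1 b hb).ne_empty <|
    subset_empty.mp (ground_zero ▸ hA.subset_ground hb)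

lemma notMem_of_ssubset (hA : IsSetPartition n A) {a c : Finset ℕ} (hc : c ∈ A)
    (ha : a.Nonempty) (hac : a ⊂ c) : a ∉ A := fun haA => by
  obtain ⟨x, hx⟩ := ha
  exact disjoint_left.mp (hA.2.1 a haA c hc hac.ne) hx (hac.subset hx)

end IsSetPartition

/-! ### Projections of set partitions -/

def projP (π : Finset ℕ → Finset ℕ) (C : Finset (Finset ℕ)) : Finset (Finset ℕ) :=
  (C.image π).filter (·.Nonempty)

section projP

variable {π π' : Finset ℕ → Finset ℕ} {C : Finset (Finset ℕ)}

lemma mem_projP {b : Finset ℕ} : b ∈ projP π C ↔ (∃ c ∈ C, π c = b) ∧ b.Nonempty := by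
  simp [projP]

lemma projP_congr (h : ∀ c ∈ C, π c = π' c) : projP π C = projP π' C := by
  rw [projP, projP, image_congr h]

lemma projP_eq_self (hne : ∀ c ∈ C, c.Nonempty) (h : ∀ c ∈ C, π c = c) : projP π C = C := by
  rw [projP, image_congr h, image_id', filter_true_of_mem hne]

lemma projP_eq_empty (h : ∀ c ∈ C, π c = ∅) : projP π C = ∅ :=
  filter_false_of_mem fun b hb => by
    obtain ⟨c, hc, rfl⟩ := mem_image.mp hb
    simp [h c hc]

lemma projP_union (C' : Finset (Finset ℕ)) : projP π (C ∪ C') = projP π C ∪ projP π C' := by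
  rw [projP, image_union, filter_union, projP, projP]

lemma projP_image (f : Finset ℕ → Finset ℕ) : projP π (C.image f) = projP (π ∘ f) C := by
  rw [projP, image_image, projP]

lemma projP_insert_of_eq_empty {x : Finset ℕ} (h : π x = ∅) :
    projP π (insert x C) = projP π C := by
  rw [projP, image_insert, filter_insert, if_neg (by simp [h]), projP]

lemma projP_insert_erase {y z : Finset ℕ} (hz : z ∈ C) (h : π y = π z) :
    projP π (insert y (C.erase z)) = projP π C := by
  conv_rhs => rw [← insert_erase hz]
  rw [projP, projP, image_insert, image_insert, h]

lemma shiftP_projP (n : ℕ) : shiftP n (projP π C) = projP (fun c => (π c).image (· + n)) C := by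
  ext b
  simp only [shiftP, mem_image, mem_projP]
  constructor
  · rintro ⟨_, ⟨⟨c, hc, rfl⟩, hne⟩, rfl⟩
    exact ⟨⟨c, hc, rfl⟩, hne.image _⟩
  · rintro ⟨⟨c, hc, rfl⟩, hne⟩
    exact ⟨π c, ⟨⟨c, hc, rfl⟩, image_nonempty.mp hne⟩, rfl⟩

end projP

def lowP (n : ℕ) (c : Finset ℕ) : Finset ℕ := c ∩ ground n

def highP (n : ℕ) (c : Finset ℕ) : Finset ℕ := c.filter (n < ·)

def upP (n : ℕ) (c : Finset ℕ) : Finset ℕ := (highP n c).image (· - n)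

/-- The restriction of `C` to `{n+1, n+2, …}`, standardized. -/
def upperP (n : ℕ) (C : Finset (Finset ℕ)) : Finset (Finset ℕ) := projP (upP n) C

lemma restrictP_ground_eq_projP (n : ℕ) (C : Finset (Finset ℕ)) :
    restrictP C (ground n) = projP (lowP n) C :=
  rfl

lemma mem_lowP {n x : ℕ} {c : Finset ℕ} : x ∈ lowP n c ↔ x ∈ c ∧ 1 ≤ x ∧ x ≤ n := by
  simp [lowP, mem_ground]

lemma mem_highP {n x : ℕ} {c : Finset ℕ} : x ∈ highP n c ↔ x ∈ c ∧ n < x := mem_filter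

lemma mem_upP {n x : ℕ} {c : Finset ℕ} : x ∈ upP n c ↔ 0 < x ∧ x + n ∈ c := by
  simp only [upP, mem_image, mem_highP]
  constructor
  · rintro ⟨y, ⟨hy, hny⟩, rfl⟩
    exact ⟨by omega, by rwa [Nat.sub_add_cancel hny.le]⟩
  · rintro ⟨hx, hxc⟩
    exact ⟨x + n, ⟨hxc, by omega⟩, by omega⟩

lemma image_upP (n : ℕ) (c : Finset ℕ) : (upP n c).image (· + n) = highP n c := by
  ext x
  simp only [mem_image, mem_upP, mem_highP]
  constructor
  · rintro ⟨y, ⟨hy, hyc⟩, rfl⟩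
    exact ⟨hyc, by omega⟩
  · rintro ⟨hxc, hnx⟩
    exact ⟨x - n, ⟨by omega, by rwa [Nat.sub_add_cancel hnx.le]⟩, by omega⟩

lemma shiftP_upperP (n : ℕ) (C : Finset (Finset ℕ)) :
    shiftP n (upperP n C) = projP (highP n) C := by
  simp only [upperP, shiftP_projP, image_upP]

lemma lowP_union_highP {n : ℕ} {c : Finset ℕ} (hc : ∀ x ∈ c, 1 ≤ x) :
    lowP n c ∪ highP n c = c := by
  ext x
  simp only [mem_union, mem_lowP, mem_highP]
  have := hc x
  constructor
  · rintro (h | h) <;> exact h.1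
  · intro hx
    by_cases hxn : x ≤ n
    · exact Or.inl ⟨hx, this hx, hxn⟩
    · exact Or.inr ⟨hx, by omega⟩

lemma lowP_lt_highP {n : ℕ} {c d : Finset ℕ} : ∀ x ∈ lowP n c, ∀ y ∈ highP n d, x < y := by
  intro x hx y hy
  have := (mem_lowP.mp hx).2.2
  have := (mem_highP.mp hy).2
  omega

lemma disjoint_lowP_highP {n : ℕ} {c d : Finset ℕ} : Disjoint (lowP n c) (highP n d) :=
  disjoint_left.mpr fun x hx hx' => lt_irrefl x (lowP_lt_highP x hx x hx')

/-! ### The order `≤_*` -/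

section leStar

variable {n : ℕ} {A B : Finset (Finset ℕ)}

lemma coverStar.card_lt (h : coverStar A B) : B.card < A.card := by
  obtain ⟨a, ha, a', ha', hne, -, rfl⟩ := h
  have h2 : 2 ≤ A.card := one_lt_card.mpr ⟨a, ha, a', ha', hne⟩
  calc (insert (a ∪ a') ((A.erase a).erase a')).card
      ≤ ((A.erase a).erase a').card + 1 := card_insert_le _ _
    _ = A.card - 2 + 1 := by
      rw [card_erase_of_mem (mem_erase.mpr ⟨hne.symm, ha'⟩), card_erase_of_mem ha]; omega
    _ < A.card := by omega

lemma leStar.eq_or_card_lt (h : leStar A B) : B = A ∨ B.card < A.card := by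
  induction h with
  | refl => exact .inl rfl
  | tail _ hcov ih =>
    rcases ih with rfl | hlt
    · exact .inr hcov.card_lt
    · exact .inr (hcov.card_lt.trans hlt)

lemma IsSetPartition.of_coverStar (hA : IsSetPartition n A) (h : coverStar A B) :
    IsSetPartition n B := by
  obtain ⟨a, ha, a', ha', hne, -, rfl⟩ := h
  have hmem : ∀ b ∈ insert (a ∪ a') ((A.erase a).erase a'),
      b = a ∪ a' ∨ (b ∈ A ∧ b ≠ a ∧ b ≠ a') := by
    intro b hb
    simp only [mem_insert, mem_erase] at hb
    tauto
  refine .of_subset_of_cover (fun b hb => ?_) (fun b hb c hc hbc => ?_) (fun b hb => ?_)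
    (fun x hx => ?_)
  · rcases hmem b hb with rfl | ⟨hbA, -⟩
    · exact (hA.1 a ha).mono subset_union_left
    · exact hA.1 b hbA
  · rcases hmem b hb with rfl | ⟨hbA, hba, hba'⟩ <;> rcases hmem c hc with rfl | ⟨hcA, hca, hca'⟩
    · exact absurd rfl hbc
    · exact disjoint_union_left.mpr
        ⟨hA.2.1 a ha c hcA (Ne.symm hca), hA.2.1 a' ha' c hcA (Ne.symm hca')⟩
    · exact disjoint_union_right.mpr ⟨hA.2.1 b hbA a ha hba, hA.2.1 b hbA a' ha' hba'⟩
    · exact hA.2.1 b hbA c hcA hbc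
  · rcases hmem b hb with rfl | ⟨hbA, -⟩
    · exact union_subset (hA.subset_ground ha) (hA.subset_ground ha')
    · exact hA.subset_ground hbA
  · obtain ⟨b, hb, hxb⟩ := hA.exists_mem hx
    by_cases hba : b = a ∨ b = a'
    · refine ⟨a ∪ a', mem_insert_self _ _, ?_⟩
      rcases hba with rfl | rfl <;> simp [hxb]
    · rw [not_or] at hba
      exact ⟨b, mem_insert_of_mem (mem_erase.mpr ⟨hba.2, mem_erase.mpr ⟨hba.1, hb⟩⟩), hxb⟩

lemma IsSetPartition.of_leStar (hA : IsSetPartition n A) (h : leStar A B) :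
    IsSetPartition n B := by
  induction h with
  | refl => exact hA
  | tail _ hcov ih => exact ih.of_coverStar hcov

end leStar

structure IsBlockProjection (π : Finset ℕ → Finset ℕ) : Prop where
  map_union : ∀ x y, π (x ∪ y) = π x ∪ π y
  disjoint : ∀ x y, Disjoint x y → Disjoint (π x) (π y)
  lt : ∀ x y : Finset ℕ, (∀ i ∈ x, ∀ j ∈ y, i < j) → ∀ i ∈ π x, ∀ j ∈ π y, i < j

section projP

variable {π : Finset ℕ → Finset ℕ} {C E : Finset (Finset ℕ)}

lemma projP_insert_of_nonempty {x : Finset ℕ} (h : (π x).Nonempty) :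
    projP π (insert x C) = insert (π x) (projP π C) := by
  rw [projP, image_insert, filter_insert, if_pos h, projP]

lemma projP_insert_congr {x y : Finset ℕ} (h : π x = π y) :
    projP π (insert x C) = projP π (insert y C) := by
  rw [projP, projP, image_insert, image_insert, h]

lemma notMem_projP {x : Finset ℕ} (hπ : IsBlockProjection π) (hx : (π x).Nonempty)
    (hC : ∀ c ∈ C, Disjoint x c) : π x ∉ projP π C := fun h => by
  obtain ⟨⟨c, hc, hcx⟩, -⟩ := mem_projP.mp h
  have := hπ.disjoint _ _ (hC c hc)
  rw [hcx, disjoint_self] at this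
  exact hx.ne_empty this

lemma IsBlockProjection.projP_insert_union_of_eq_empty (hπ : IsBlockProjection π)
    {a a' : Finset ℕ} {D : Finset (Finset ℕ)} (h : π a' = ∅) :
    projP π (insert (a ∪ a') D) = projP π (insert a (insert a' D)) := by
  rw [insert_comm, projP_insert_of_eq_empty h,
    projP_insert_congr (x := a ∪ a') (y := a) (by rw [hπ.map_union, h, union_empty])]

lemma IsBlockProjection.coverStar_projP_insert_insert (hπ : IsBlockProjection π)
    {a a' : Finset ℕ} {D : Finset (Finset ℕ)} (hdisj : Disjoint a a')
    (hD : ∀ d ∈ D, Disjoint a d ∧ Disjoint a' d) (ha : (π a).Nonempty) (ha' : (π a').Nonempty)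
    (hlt : ∀ x ∈ a, ∀ y ∈ a', x < y) :
    coverStar (projP π (insert a (insert a' D))) (projP π (insert (a ∪ a') D)) := by
  have hne : π a ≠ π a' := fun h => by
    have := hπ.disjoint _ _ hdisj
    rw [h, disjoint_self] at this
    exact ha'.ne_empty this
  have haD : π a ∉ insert (π a') (projP π D) := fun h =>
    (mem_insert.mp h).elim hne (notMem_projP hπ ha fun d hd => (hD d hd).1)
  rw [projP_insert_of_nonempty ha, projP_insert_of_nonempty ha',
    projP_insert_of_nonempty (hπ.map_union a a' ▸ ha.mono subset_union_left), hπ.map_union]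
  refine ⟨π a, mem_insert_self _ _, π a', mem_insert_of_mem (mem_insert_self _ _), hne,
    hπ.lt a a' hlt, ?_⟩
  rw [erase_insert haD, erase_insert (notMem_projP hπ ha' fun d hd => (hD d hd).2)]

lemma IsBlockProjection.leStar_projP_of_coverStar (hπ : IsBlockProjection π)
    (hE : ∀ b ∈ E, ∀ b' ∈ E, b ≠ b' → Disjoint b b') (h : coverStar E C) :
    leStar (projP π E) (projP π C) := by
  obtain ⟨a, ha, a', ha', hne, hlt, rfl⟩ := h
  set D := (E.erase a).erase a'
  have hD : ∀ d ∈ D, Disjoint a d ∧ Disjoint a' d := fun d hd => by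
    obtain ⟨hda', hda, hdE⟩ : d ≠ a' ∧ d ≠ a ∧ d ∈ E := by simpa [D] using hd
    exact ⟨hE a ha d hdE (Ne.symm hda), hE a' ha' d hdE (Ne.symm hda')⟩
  have hE_eq : E = insert a (insert a' D) := by
    rw [insert_erase (mem_erase.mpr ⟨hne.symm, ha'⟩), insert_erase ha]
  rw [hE_eq]
  by_cases hpa : π a = ∅
  · rw [union_comm, hπ.projP_insert_union_of_eq_empty hpa, insert_comm]
    exact .refl
  by_cases hpa' : π a' = ∅
  · rw [hπ.projP_insert_union_of_eq_empty hpa']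
    exact .refl
  exact .single (hπ.coverStar_projP_insert_insert (hE a ha a' ha' hne) hD
    (nonempty_iff_ne_empty.mpr hpa) (nonempty_iff_ne_empty.mpr hpa') hlt)

lemma IsBlockProjection.leStar_projP {N : ℕ} (hπ : IsBlockProjection π)
    (hE : IsSetPartition N E) (h : leStar E C) : leStar (projP π E) (projP π C) := by
  induction h with
  | refl => exact .refl
  | tail hxy hcov ih => exact ih.trans (hπ.leStar_projP_of_coverStar (hE.of_leStar hxy).2.1 hcov)

end projP

lemma isBlockProjection_lowP (n : ℕ) : IsBlockProjection (lowP n) where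
  map_union _ _ := union_inter_distrib_right _ _ _
  disjoint _ _ h := h.mono inter_subset_left inter_subset_left
  lt _ _ h i hi j hj := h i (mem_of_mem_inter_left hi) j (mem_of_mem_inter_left hj)

lemma isBlockProjection_upP (n : ℕ) : IsBlockProjection (upP n) where
  map_union x y := by ext; simp only [mem_upP, mem_union]; tauto
  disjoint x y h := disjoint_left.mpr fun i hx hy =>
    disjoint_left.mp h (mem_upP.mp hx).2 (mem_upP.mp hy).2
  lt x y h i hi j hj := by
    have := h (i + n) (mem_upP.mp hi).2 (j + n) (mem_upP.mp hj).2
    omega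

lemma isSetPartition_projP {m : ℕ} {π : Finset ℕ → Finset ℕ} (hπ : IsBlockProjection π)
    {C : Finset (Finset ℕ)} (hC : ∀ b ∈ C, ∀ b' ∈ C, b ≠ b' → Disjoint b b')
    (hsub : ∀ c ∈ C, π c ⊆ ground m)
    (hcov : ∀ x ∈ ground m, ∃ c ∈ C, x ∈ π c) : IsSetPartition m (projP π C) := by
  refine .of_subset_of_cover (fun b hb => (mem_projP.mp hb).2) (fun b hb b' hb' hne => ?_)
    (fun b hb => ?_) (fun x hx => ?_)
  · obtain ⟨⟨c, hc, rfl⟩, -⟩ := mem_projP.mp hb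
    obtain ⟨⟨c', hc', rfl⟩, -⟩ := mem_projP.mp hb'
    exact hπ.disjoint _ _ (hC c hc c' hc' fun h => hne (h ▸ rfl))
  · obtain ⟨⟨c, hc, rfl⟩, -⟩ := mem_projP.mp hb
    exact hsub c hc
  · obtain ⟨c, hc, hxc⟩ := hcov x hx
    exact ⟨π c, mem_projP.mpr ⟨⟨c, hc, rfl⟩, ⟨x, hxc⟩⟩, hxc⟩

lemma isSetPartition_restrictP_ground {n k : ℕ} {C : Finset (Finset ℕ)}
    (hC : IsSetPartition (n + k) C) :
    IsSetPartition n (restrictP C (ground n)) :=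
  isSetPartition_projP (isBlockProjection_lowP n) hC.2.1 (fun _ _ => inter_subset_right)
    fun x hx => by
      obtain ⟨c, hc, hxc⟩ := hC.exists_mem (ground_mono (by omega) hx)
      exact ⟨c, hc, mem_inter.mpr ⟨hxc, hx⟩⟩

lemma isSetPartition_upperP {n k : ℕ} {C : Finset (Finset ℕ)}
    (hC : IsSetPartition (n + k) C) :
    IsSetPartition k (upperP n C) := by
  refine isSetPartition_projP (isBlockProjection_upP n) hC.2.1 (fun c hc x hx => ?_) fun x hx => ?_
  · obtain ⟨hx, hxc⟩ := mem_upP.mp hx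
    have := mem_ground.mp (hC.subset_ground hc hxc)
    exact mem_ground.mpr ⟨hx, by omega⟩
  · have := mem_ground.mp hx
    obtain ⟨c, hc, hxc⟩ := hC.exists_mem (mem_ground.mpr (by omega : 1 ≤ x + n ∧ x + n ≤ n + k))
    exact ⟨c, hc, mem_upP.mpr ⟨by omega, hxc⟩⟩

/-! ### Shifted concatenation -/

section concatP

variable {n k : ℕ} {A B : Finset (Finset ℕ)}

lemma image_add_subset_ground {b : Finset ℕ} (hb : b ⊆ ground k) (n : ℕ) :
    b.image (· + n) ⊆ ground (n + k) := by
  intro x hx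
  obtain ⟨y, hy, rfl⟩ := mem_image.mp hx
  have := mem_ground.mp (hb hy)
  exact mem_ground.mpr ⟨by omega, by omega⟩

lemma disjoint_image_add_of_subset_ground {a b : Finset ℕ} (ha : a ⊆ ground n)
    (hb : ∀ y ∈ b, 1 ≤ y) : Disjoint a (b.image (· + n)) := by
  refine disjoint_left.mpr fun x hxa hxb => ?_
  obtain ⟨y, hy, rfl⟩ := mem_image.mp hxb
  have := (mem_ground.mp (ha hxa)).2
  have := hb y hy
  omega

lemma lowP_of_subset_ground {a : Finset ℕ} (ha : a ⊆ ground n) : lowP n a = a :=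
  inter_eq_left.mpr ha

lemma upP_zero {c : Finset ℕ} (hc : ∀ y ∈ c, 1 ≤ y) : upP 0 c = c := by
  ext x
  rw [mem_upP, add_zero]
  exact ⟨And.right, fun hx => ⟨hc x hx, hx⟩⟩

lemma concatP_empty (n : ℕ) (A : Finset (Finset ℕ)) : concatP n A ∅ = A := by
  simp [concatP, shiftP]

lemma concatP_zero (B : Finset (Finset ℕ)) : concatP 0 ∅ B = B := by
  simp [concatP, shiftP]

lemma shiftP_shiftP (k j : ℕ) (Z : Finset (Finset ℕ)) :
    shiftP k (shiftP j Z) = shiftP (k + j) Z := by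
  simp only [shiftP, image_image]
  congr 1
  funext b
  simp only [Function.comp_def, image_image]
  congr 1
  funext x
  omega

lemma shiftP_union (n : ℕ) (X Y : Finset (Finset ℕ)) :
    shiftP n (X ∪ Y) = shiftP n X ∪ shiftP n Y :=
  image_union _ _

lemma concatP_assoc (k j : ℕ) (X Y Z : Finset (Finset ℕ)) :
    concatP (k + j) (concatP k X Y) Z = concatP k X (concatP j Y Z) := by
  rw [concatP, concatP, concatP, concatP, union_assoc, ← shiftP_shiftP, shiftP_union]

lemma isSetPartition_concatP (hA : IsSetPartition n A) (hB : IsSetPartition k B) :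
    IsSetPartition (n + k) (concatP n A B) := by
  have hinj : Function.Injective (· + n) := add_left_injective n
  refine .of_subset_of_cover (fun c hc => ?_) (fun b hb c hc hbc => ?_) (fun c hc => ?_)
    (fun x hx => ?_)
  · rcases mem_union.mp hc with hc | hc
    · exact hA.1 c hc
    · obtain ⟨b, hb, rfl⟩ := mem_image.mp hc
      exact (hB.1 b hb).image _
  · rcases mem_union.mp hb with hb | hb <;> rcases mem_union.mp hc with hc | hc
    · exact hA.2.1 b hb c hc hbc
    · obtain ⟨c', hc', rfl⟩ := mem_image.mp hc
      exact disjoint_image_add_of_subset_ground (hA.subset_ground hb) fun _ => hB.one_le hc'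
    · obtain ⟨b', hb', rfl⟩ := mem_image.mp hb
      exact (disjoint_image_add_of_subset_ground (hA.subset_ground hc)
        fun _ => hB.one_le hb').symm
    · obtain ⟨b', hb', rfl⟩ := mem_image.mp hb
      obtain ⟨c', hc', rfl⟩ := mem_image.mp hc
      exact (disjoint_image hinj).mpr (hB.2.1 b' hb' c' hc' fun h => hbc (h ▸ rfl))
  · rcases mem_union.mp hc with hc | hc
    · exact (hA.subset_ground hc).trans (ground_mono (by omega))
    · obtain ⟨b, hb, rfl⟩ := mem_image.mp hc
      exact image_add_subset_ground (hB.subset_ground hb) n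
  · have hx' := mem_ground.mp hx
    by_cases hxn : x ≤ n
    · obtain ⟨b, hb, hxb⟩ := hA.exists_mem (mem_ground.mpr ⟨hx'.1, hxn⟩)
      exact ⟨b, mem_union_left _ hb, hxb⟩
    · obtain ⟨b, hb, hxb⟩ := hB.exists_mem (mem_ground.mpr (by omega : 1 ≤ x - n ∧ x - n ≤ k))
      exact ⟨b.image (· + n), mem_union_right _ (mem_image_of_mem _ hb),
        mem_image.mpr ⟨x - n, hxb, by omega⟩⟩

lemma lowP_image_add {j : ℕ} {c : Finset ℕ} (hc : ∀ y ∈ c, 1 ≤ y) :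
    lowP (k + j) (c.image (· + k)) = (lowP j c).image (· + k) := by
  ext x
  simp only [mem_lowP, mem_image]
  constructor
  · rintro ⟨⟨y, hy, rfl⟩, -, h⟩
    exact ⟨y, ⟨hy, hc y hy, by omega⟩, rfl⟩
  · rintro ⟨y, ⟨hy, h1, h2⟩, rfl⟩
    exact ⟨⟨y, hy, rfl⟩, by omega, by omega⟩

lemma upP_image_add {j : ℕ} (c : Finset ℕ) : upP (k + j) (c.image (· + k)) = upP j c := by
  ext x
  simp only [mem_upP, mem_image]
  constructor
  · rintro ⟨hx, y, hy, hyx⟩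
    exact ⟨hx, by rwa [show y = x + j by omega] at hy⟩
  · rintro ⟨hx, hxc⟩
    exact ⟨hx, x + j, hxc, by omega⟩

lemma upP_of_subset_ground {j : ℕ} {a : Finset ℕ} (ha : a ⊆ ground k) : upP (k + j) a = ∅ :=
  eq_empty_of_forall_notMem fun x hx => by
    have := mem_ground.mp (ha (mem_upP.mp hx).2)
    have := (mem_upP.mp hx).1
    omega

lemma projP_lowP_concatP {j : ℕ} (hB : IsSetPartition k B) {C : Finset (Finset ℕ)}
    (hC : ∀ c ∈ C, ∀ y ∈ c, 1 ≤ y) :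
    projP (lowP (k + j)) (concatP k B C) = concatP k B (projP (lowP j) C) := by
  rw [concatP, projP_union, projP_eq_self hB.1 fun b hb => lowP_of_subset_ground
      ((hB.subset_ground hb).trans (ground_mono (by omega))),
    shiftP, projP_image, projP_congr (π := lowP (k + j) ∘ fun b => b.image (· + k))
      (π' := fun c => (lowP j c).image (· + k)) fun c hc => lowP_image_add (hC c hc),
    ← shiftP_projP, concatP]

lemma upperP_concatP {j : ℕ} (hB : IsSetPartition k B) (C : Finset (Finset ℕ)) :
    upperP (k + j) (concatP k B C) = upperP j C := by
  rw [upperP, concatP, projP_union, projP_eq_empty fun b hb => upP_of_subset_ground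
      (hB.subset_ground hb), empty_union, shiftP, projP_image]
  exact projP_congr fun c _ => upP_image_add c

lemma restrictP_concatP_self (hA : IsSetPartition n A) (hB : IsSetPartition k B) :
    restrictP (concatP n A B) (ground n) = A := by
  have h := projP_lowP_concatP (j := 0) hA fun c hc _ => hB.one_le hc
  rw [add_zero] at h
  rw [restrictP_ground_eq_projP, h, projP_eq_empty fun c _ => by simp [lowP, ground_zero],
    concatP_empty]

lemma upperP_concatP_self (hA : IsSetPartition n A) (hB : IsSetPartition k B) :
    upperP n (concatP n A B) = B := by
  have h := upperP_concatP (j := 0) hA B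
  rw [add_zero] at h
  rw [h, upperP, projP_eq_self hB.1 fun c hc => upP_zero fun _ => hB.one_le hc]

lemma concatP_injective {A' B' : Finset (Finset ℕ)} (hA : IsSetPartition n A)
    (hA' : IsSetPartition n A') (hB : IsSetPartition k B) (hB' : IsSetPartition k B')
    (h : concatP n A B = concatP n A' B') : A = A' ∧ B = B' :=
  ⟨by rw [← restrictP_concatP_self hA hB, h, restrictP_concatP_self hA' hB'],
    by rw [← upperP_concatP_self hA hB, h, upperP_concatP_self hA' hB']⟩

end concatP

section monotone

variable {n k : ℕ} {A A' B B' S : Finset (Finset ℕ)}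

lemma coverStar.union_right (h : coverStar A A') (hS : Disjoint A S) :
    coverStar (A ∪ S) (A' ∪ S) := by
  obtain ⟨a, ha, a', ha', hne, hlt, rfl⟩ := h
  refine ⟨a, mem_union_left _ ha, a', mem_union_left _ ha', hne, hlt, ?_⟩
  rw [insert_union, erase_union_distrib, erase_union_distrib,
    erase_eq_of_notMem (disjoint_left.mp hS ha), erase_eq_of_notMem (disjoint_left.mp hS ha')]

lemma coverStar.shiftP (h : coverStar B B') (n : ℕ) : coverStar (shiftP n B) (shiftP n B') := by
  obtain ⟨a, ha, a', ha', hne, hlt, rfl⟩ := h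
  have hinj : Function.Injective fun b : Finset ℕ => b.image (· + n) :=
    image_injective (add_left_injective n)
  refine ⟨a.image (· + n), mem_image_of_mem _ ha, a'.image (· + n), mem_image_of_mem _ ha',
    hinj.ne hne, ?_, ?_⟩
  · simp only [mem_image]
    rintro _ ⟨x, hx, rfl⟩ _ ⟨y, hy, rfl⟩
    exact Nat.add_lt_add_right (hlt x hx y hy) n
  · rw [_root_.shiftP, image_insert, image_erase hinj, image_erase hinj, image_union]
    rfl

lemma disjoint_shiftP (hA : IsSetPartition n A) (hB : IsSetPartition k B) :
    Disjoint A (shiftP n B) := by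
  refine disjoint_left.mpr fun b hbA hbB => ?_
  obtain ⟨c, hc, rfl⟩ := mem_image.mp hbB
  have := disjoint_image_add_of_subset_ground (hA.subset_ground hbA) fun _ => hB.one_le hc
  rw [disjoint_self, bot_eq_empty, image_eq_empty] at this
  exact (hB.1 c hc).ne_empty this

lemma leStar_concatP_left (hA : IsSetPartition n A) (hB : IsSetPartition k B)
    (h : leStar A A') : leStar (concatP n A B) (concatP n A' B) := by
  induction h with
  | refl => exact .refl
  | tail hxy hcov ih => exact ih.tail (hcov.union_right (disjoint_shiftP (hA.of_leStar hxy) hB))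

lemma leStar_concatP_right (hA : IsSetPartition n A) (hB : IsSetPartition k B)
    (h : leStar B B') : leStar (concatP n A B) (concatP n A B') := by
  rw [concatP, concatP, union_comm A, union_comm A]
  induction h with
  | refl => exact .refl
  | tail hxy hcov ih =>
    exact ih.tail ((hcov.shiftP n).union_right (disjoint_shiftP hA (hB.of_leStar hxy)).symm)

end monotone

/-! ### Splitting a set partition at `n` -/

section split

variable {n N : ℕ} {C : Finset (Finset ℕ)}

lemma lowP_lowP (c : Finset ℕ) : lowP n (lowP n c) = lowP n c :=
  lowP_of_subset_ground inter_subset_right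

lemma highP_highP (c : Finset ℕ) : highP n (highP n c) = highP n c := by
  ext x
  simp [mem_highP]

lemma lowP_highP (c : Finset ℕ) : lowP n (highP n c) = ∅ :=
  eq_empty_of_forall_notMem fun x hx => by
    have := mem_lowP.mp hx
    have := (mem_highP.mp this.1).2
    omega

lemma highP_lowP (c : Finset ℕ) : highP n (lowP n c) = ∅ :=
  eq_empty_of_forall_notMem fun x hx => by
    have := mem_highP.mp hx
    have := (mem_lowP.mp this.1).2
    omega

def crossing (n : ℕ) (C : Finset (Finset ℕ)) : Finset (Finset ℕ) :=
  C.filter fun c => (lowP n c).Nonempty ∧ (highP n c).Nonempty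

lemma IsSetPartition.insert_insert_erase (hC : IsSetPartition N C) {a a' c : Finset ℕ}
    (hc : c ∈ C) (ha : a.Nonempty) (ha' : a'.Nonempty) (hdisj : Disjoint a a')
    (hunion : a ∪ a' = c) :
    IsSetPartition N (insert a (insert a' (C.erase c))) := by
  have hmem : ∀ b ∈ insert a (insert a' (C.erase c)), b = a ∨ b = a' ∨ (b ∈ C ∧ b ≠ c) := by
    intro b hb
    simp only [mem_insert, mem_erase] at hb
    tauto
  have hac : a ⊆ c := hunion ▸ subset_union_left
  have ha'c : a' ⊆ c := hunion ▸ subset_union_right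
  refine .of_subset_of_cover (fun b hb => ?_) (fun b hb d hd hbd => ?_) (fun b hb => ?_)
    (fun x hx => ?_)
  · rcases hmem b hb with rfl | rfl | ⟨hbC, -⟩
    · exact ha
    · exact ha'
    · exact hC.1 b hbC
  · rcases hmem b hb with rfl | rfl | ⟨hbC, hbc⟩ <;> rcases hmem d hd with rfl | rfl | ⟨hdC, hdc⟩
    · exact absurd rfl hbd
    · exact hdisj
    · exact (hC.2.1 c hc d hdC (Ne.symm hdc)).mono_left hac
    · exact hdisj.symm
    · exact absurd rfl hbd
    · exact (hC.2.1 c hc d hdC (Ne.symm hdc)).mono_left ha'c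
    · exact (hC.2.1 b hbC c hc hbc).mono_right hac
    · exact (hC.2.1 b hbC c hc hbc).mono_right ha'c
    · exact hC.2.1 b hbC d hdC hbd
  · rcases hmem b hb with rfl | rfl | ⟨hbC, -⟩
    · exact hac.trans (hC.subset_ground hc)
    · exact ha'c.trans (hC.subset_ground hc)
    · exact hC.subset_ground hbC
  · obtain ⟨b, hb, hxb⟩ := hC.exists_mem hx
    by_cases hbc : b = c
    · subst hbc
      rw [← hunion, mem_union] at hxb
      rcases hxb with hxb | hxb
      · exact ⟨a, mem_insert_self _ _, hxb⟩
      · exact ⟨a', mem_insert_of_mem (mem_insert_self _ _), hxb⟩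
    · exact ⟨b, mem_insert_of_mem (mem_insert_of_mem (mem_erase.mpr ⟨hbc, hb⟩)), hxb⟩

lemma coverStar_insert_insert {a a' : Finset ℕ} {D : Finset (Finset ℕ)} (hne : a ≠ a')
    (ha : a ∉ D) (ha' : a' ∉ D) (hlt : ∀ x ∈ a, ∀ y ∈ a', x < y) :
    coverStar (insert a (insert a' D)) (insert (a ∪ a') D) := by
  refine ⟨a, mem_insert_self _ _, a', mem_insert_of_mem (mem_insert_self _ _), hne, hlt, ?_⟩
  rw [erase_insert (by simp [hne, ha]), erase_insert ha']

lemma lowP_highP_cases (hC : IsSetPartition N C) {c : Finset ℕ} (hc : c ∈ C)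
    (hcross : c ∉ crossing n C) :
    (lowP n c = c ∧ highP n c = ∅) ∨ (lowP n c = ∅ ∧ highP n c = c) := by
  have hunion := lowP_union_highP (n := n) fun _ => hC.one_le hc
  simp only [crossing, mem_filter, hc, true_and, not_and, not_nonempty_iff_eq_empty] at hcross
  by_cases hlow : (lowP n c).Nonempty
  · have hhigh := hcross hlow
    rw [hhigh, union_empty] at hunion
    exact .inl ⟨hunion, hhigh⟩
  · rw [not_nonempty_iff_eq_empty] at hlow
    rw [hlow, empty_union] at hunion
    exact .inr ⟨hlow, hunion⟩

lemma projP_lowP_union_projP_highP_of_crossing_eq_empty (hC : IsSetPartition N C)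
    (h : crossing n C = ∅) : projP (lowP n) C ∪ projP (highP n) C = C := by
  have hcases := fun c (hc : c ∈ C) =>
    lowP_highP_cases hC hc (h ▸ notMem_empty c)
  ext b
  simp only [mem_union, mem_projP]
  constructor
  · rintro (⟨⟨c, hc, rfl⟩, hne⟩ | ⟨⟨c, hc, rfl⟩, hne⟩) <;>
      rcases hcases c hc with ⟨hl, hh⟩ | ⟨hl, hh⟩
    · rwa [hl]
    · exact absurd hl hne.ne_empty
    · exact absurd hh hne.ne_empty
    · rwa [hh]
  · intro hb
    rcases hcases b hb with ⟨hl, -⟩ | ⟨-, hh⟩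
    · exact .inl ⟨⟨b, hb, hl⟩, hC.1 b hb⟩
    · exact .inr ⟨⟨b, hb, hh⟩, hC.1 b hb⟩

def splitBlock (n : ℕ) (C : Finset (Finset ℕ)) (c : Finset ℕ) : Finset (Finset ℕ) :=
  insert (lowP n c) (insert (highP n c) (C.erase c))

section splitBlock

variable {c : Finset ℕ}

lemma IsSetPartition.splitBlock (hC : IsSetPartition N C) (hc : c ∈ crossing n C) :
    IsSetPartition N (splitBlock n C c) := by
  obtain ⟨hcC, hlow, hhigh⟩ := mem_filter.mp hc
  exact hC.insert_insert_erase hcC hlow hhigh disjoint_lowP_highP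
    (lowP_union_highP fun _ => hC.one_le hcC)

lemma coverStar_splitBlock (hC : IsSetPartition N C) (hc : c ∈ crossing n C) :
    coverStar (splitBlock n C c) C := by
  obtain ⟨hcC, hlow, hhigh⟩ := mem_filter.mp hc
  have hunion := lowP_union_highP (n := n) fun _ => hC.one_le hcC
  have hdisj : Disjoint (lowP n c) (highP n c) := disjoint_lowP_highP
  have hlt : lowP n c < lowP n c ⊔ highP n c :=
    left_lt_sup.mpr fun h => hhigh.ne_empty (hdisj.symm.eq_bot_of_le h)
  have hlt' : highP n c < lowP n c ⊔ highP n c :=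
    right_lt_sup.mpr fun h => hlow.ne_empty (hdisj.eq_bot_of_le h)
  rw [sup_eq_union, hunion] at hlt hlt'
  have hne : lowP n c ≠ highP n c := fun h => by
    rw [h, disjoint_self] at hdisj
    exact hhigh.ne_empty hdisj
  have := coverStar_insert_insert (D := C.erase c) hne
    (fun h => hC.notMem_of_ssubset hcC hlow hlt (mem_of_mem_erase h))
    (fun h => hC.notMem_of_ssubset hcC hhigh hlt' (mem_of_mem_erase h)) lowP_lt_highP
  rwa [hunion, insert_erase hcC] at this

lemma projP_lowP_splitBlock (hc : c ∈ C) :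
    projP (lowP n) (splitBlock n C c) = projP (lowP n) C := by
  rw [splitBlock, projP_insert_congr (lowP_lowP c), insert_comm,
    projP_insert_of_eq_empty (lowP_highP c), projP_insert_erase hc rfl]

lemma projP_highP_splitBlock (hc : c ∈ C) :
    projP (highP n) (splitBlock n C c) = projP (highP n) C := by
  rw [splitBlock, projP_insert_of_eq_empty (highP_lowP c),
    projP_insert_erase hc (highP_highP c)]

lemma crossing_splitBlock : crossing n (splitBlock n C c) = (crossing n C).erase c := by
  simp [splitBlock, crossing, filter_insert, lowP_lowP, highP_lowP, lowP_highP, highP_highP,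
    filter_erase]

end splitBlock

lemma leStar_projP_lowP_union_projP_highP (hC : IsSetPartition N C) :
    leStar (projP (lowP n) C ∪ projP (highP n) C) C := by
  obtain ⟨m, hm⟩ : ∃ m, (crossing n C).card = m := ⟨_, rfl⟩
  induction m generalizing C with
  | zero =>
    rw [projP_lowP_union_projP_highP_of_crossing_eq_empty hC (card_eq_zero.mp hm)]
    exact .refl
  | succ m ih =>
    obtain ⟨c, hc⟩ := (crossing n C).card_pos.mp (by omega)
    have hcC := (mem_filter.mp hc).1
    have := ih (hC.splitBlock hc)
      (by rw [crossing_splitBlock, card_erase_of_mem hc, hm, Nat.add_sub_cancel])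
    rw [projP_lowP_splitBlock hcC, projP_highP_splitBlock hcC] at this
    exact this.tail (coverStar_splitBlock hC hc)

lemma leStar_concatP_restrictP_upperP (hC : IsSetPartition N C) :
    leStar (concatP n (restrictP C (ground n)) (upperP n C)) C := by
  rw [concatP, shiftP_upperP, restrictP_ground_eq_projP]
  exact leStar_projP_lowP_union_projP_highP hC

end split

lemma leStar_concatP_iff {n k : ℕ} {A B C : Finset (Finset ℕ)} (hA : IsSetPartition n A)
    (hB : IsSetPartition k B) (hC : IsSetPartition (n + k) C) :
    leStar (concatP n A B) C ↔ leStar A (restrictP C (ground n)) ∧ leStar B (upperP n C) := by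
  have hAB := isSetPartition_concatP hA hB
  constructor
  · intro h
    have hlow := (isBlockProjection_lowP n).leStar_projP hAB h
    have hup := (isBlockProjection_upP n).leStar_projP hAB h
    rw [← restrictP_ground_eq_projP, restrictP_concatP_self hA hB] at hlow
    rw [← upperP, ← upperP, upperP_concatP_self hA hB] at hup
    exact ⟨hlow, hup⟩
  · rintro ⟨hlow, hup⟩
    have hC₁ : IsSetPartition n (restrictP C (ground n)) := hA.of_leStar hlow
    exact ((leStar_concatP_left hA hB hlow).trans (leStar_concatP_right hC₁ hB hup)).trans
      (leStar_concatP_restrictP_upperP hC)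

/-! ### The meet with `{[n]} | {[k]}` -/

section meet

variable {n k : ℕ} {C : Finset (Finset ℕ)}

lemma meetP_union (C Y Y' : Finset (Finset ℕ)) : meetP C (Y ∪ Y') = meetP C Y ∪ meetP C Y' := by
  rw [meetP, product_union, image_union, filter_union, meetP, meetP]

lemma meetP_singleton (C : Finset (Finset ℕ)) (y : Finset ℕ) :
    meetP C {y} = projP (· ∩ y) C := by
  ext b
  simp [meetP, mem_projP]

lemma meetP_onePartP (C : Finset (Finset ℕ)) (n : ℕ) : meetP C (onePartP n) = projP (lowP n) C := by
  rcases eq_or_ne n 0 with rfl | hn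
  · rw [projP_eq_empty fun c _ => by simp [lowP, ground_zero]]
    simp [onePartP, meetP]
  · rw [onePartP, if_neg hn, meetP_singleton]
    rfl

lemma inter_image_add_ground {c : Finset ℕ} (hc : c ⊆ ground (n + k)) :
    c ∩ (ground k).image (· + n) = highP n c := by
  ext x
  simp only [mem_inter, mem_image, mem_highP, mem_ground]
  constructor
  · rintro ⟨hx, y, hy, rfl⟩
    exact ⟨hx, by omega⟩
  · rintro ⟨hx, hnx⟩
    exact ⟨hx, x - n, by have := (mem_ground.mp (hc hx)).2; omega, by omega⟩

lemma meetP_shiftP_onePartP (hC : IsSetPartition (n + k) C) :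
    meetP C (shiftP n (onePartP k)) = projP (highP n) C := by
  rcases eq_or_ne k 0 with rfl | hk
  · rw [projP_eq_empty fun c hc => ?_]
    · simp [onePartP, shiftP, meetP]
    · rw [← inter_image_add_ground (hC.subset_ground hc), ground_zero, image_empty, inter_empty]
  · rw [onePartP, if_neg hk, shiftP, image_singleton, meetP_singleton]
    exact projP_congr fun c hc => inter_image_add_ground (hC.subset_ground hc)

lemma meetP_concatP_onePartP (hC : IsSetPartition (n + k) C) :
    meetP C (concatP n (onePartP n) (onePartP k)) =
      concatP n (restrictP C (ground n)) (upperP n C) := by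
  rw [concatP, meetP_union, meetP_onePartP, meetP_shiftP_onePartP hC, concatP, shiftP_upperP,
    restrictP_ground_eq_projP]

lemma meetP_concatP_onePartP_eq_iff {A B : Finset (Finset ℕ)} (hA : IsSetPartition n A)
    (hB : IsSetPartition k B) (hC : IsSetPartition (n + k) C) :
    meetP C (concatP n (onePartP n) (onePartP k)) = concatP n A B ↔
      restrictP C (ground n) = A ∧ upperP n C = B := by
  rw [meetP_concatP_onePartP hC]
  exact ⟨concatP_injective (isSetPartition_restrictP_ground hC) hA (isSetPartition_upperP hC) hB,
    fun ⟨h₁, h₂⟩ => h₁ ▸ h₂ ▸ rfl⟩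

end meet

/-! ### Atomic factorization -/

section factorization

lemma isSetPartition_concatListP :
    ∀ L : List (ℕ × Finset (Finset ℕ)), (∀ p ∈ L, IsSetPartition p.1 p.2) →
      IsSetPartition (concatListP L).1 (concatListP L).2
  | [], _ => isSetPartition_zero_empty
  | p :: L, h => by
    rw [concatListP, add_comm]
    exact isSetPartition_concatP (h p List.mem_cons_self)
      (isSetPartition_concatListP L fun q hq => h q (List.mem_cons_of_mem _ hq))

lemma concatListP_append :
    ∀ L M : List (ℕ × Finset (Finset ℕ)), concatListP (L ++ M) =
      ((concatListP M).1 + (concatListP L).1,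
        concatP (concatListP L).1 (concatListP L).2 (concatListP M).2)
  | [], M => by simp [concatListP, concatP_zero]
  | p :: L, M => by
    simp only [List.cons_append, concatListP, concatListP_append L M]
    rw [add_comm (concatListP L).1 p.1, concatP_assoc, add_comm p.1, add_assoc]

lemma exists_atomicFactorization :
    ∀ n : ℕ, ∀ A : Finset (Finset ℕ), IsSetPartition n A → ∃ L, AtomicFactorization n A L
  | n, A, hA => by
    rcases Nat.eq_zero_or_pos n with rfl | hn
    · exact ⟨[], by simp, by simp [concatListP, hA.eq_empty_of_zero]⟩
    by_cases hatom : AtomicP n A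
    · exact ⟨[(n, A)], by simpa using hatom, by simp [concatListP, concatP_empty]⟩
    obtain ⟨k, B, C, hk, hkn, hB, hC, rfl⟩ : ∃ k B C, 0 < k ∧ k < n ∧ IsSetPartition k B ∧
        IsSetPartition (n - k) C ∧ A = concatP k B C := by
      by_contra h
      exact hatom ⟨hA, hn, h⟩
    obtain ⟨L, hL, hLB⟩ := exists_atomicFactorization k B hB
    obtain ⟨M, hM, hMC⟩ := exists_atomicFactorization (n - k) C hC
    refine ⟨L ++ M, fun p hp => (List.mem_append.mp hp).elim (hL p) (hM p), ?_⟩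
    rw [concatListP_append, hLB, hMC]
    congr 1
    omega

lemma AtomicP.le_of_concatP_eq {k k' j j' : ℕ} {A A' B B' : Finset (Finset ℕ)}
    (hA : IsSetPartition k A) (hk : 0 < k) (hA' : AtomicP k' A') (hB : IsSetPartition j B)
    (hB' : IsSetPartition j' B') (hsize : k + j = k' + j')
    (h : concatP k A B = concatP k' A' B') : k' ≤ k := by
  by_contra hlt
  rw [not_le] at hlt
  have hB₁ : IsSetPartition ((k' - k) + (j - (k' - k))) B := by
    rwa [Nat.add_sub_cancel' (by omega)]
  have hA'eq : A' = concatP k A (restrictP B (ground (k' - k))) := by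
    rw [← restrictP_concatP_self hA'.1 hB', ← h, restrictP_ground_eq_projP,
      restrictP_ground_eq_projP,
      ← Nat.add_sub_cancel' hlt.le, projP_lowP_concatP hA fun c hc _ => hB.one_le hc,
      Nat.add_sub_cancel_left]
  exact hA'.2.2 ⟨k, A, _, hk, hlt, hA, isSetPartition_restrictP_ground hB₁, hA'eq⟩

lemma concatListP_injective :
    ∀ L M : List (ℕ × Finset (Finset ℕ)), (∀ p ∈ L, AtomicP p.1 p.2) →
      (∀ p ∈ M, AtomicP p.1 p.2) → concatListP L = concatListP M → L = M
  | [], [], _, _, _ => rfl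
  | [], q :: M, _, hM, h => by
    have := (hM q List.mem_cons_self).2.1
    have := congrArg Prod.fst h
    simp only [concatListP] at this
    omega
  | p :: L, [], hL, _, h => by
    have := (hL p List.mem_cons_self).2.1
    have := congrArg Prod.fst h
    simp only [concatListP] at this
    omega
  | p :: L, q :: M, hL, hM, h => by
    have hp := hL p List.mem_cons_self
    have hq := hM q List.mem_cons_self
    have hL' : ∀ r ∈ L, AtomicP r.1 r.2 := fun r hr => hL r (List.mem_cons_of_mem _ hr)
    have hM' : ∀ r ∈ M, AtomicP r.1 r.2 := fun r hr => hM r (List.mem_cons_of_mem _ hr)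
    have hCL := isSetPartition_concatListP L fun r hr => (hL' r hr).1
    have hCM := isSetPartition_concatListP M fun r hr => (hM' r hr).1
    simp only [concatListP, Prod.mk.injEq] at h
    obtain ⟨hsize, hconcat⟩ := h
    have hp₁ : p.1 = q.1 := le_antisymm
      (hp.le_of_concatP_eq hq.1 hq.2.1 hCM hCL (by omega) hconcat.symm)
      (hq.le_of_concatP_eq hp.1 hp.2.1 hCL hCM (by omega) hconcat)
    have hsize' : (concatListP L).1 = (concatListP M).1 := by omega
    rw [← hp₁] at hconcat
    obtain ⟨hp₂, htail⟩ := concatP_injective hp.1 (hp₁ ▸ hq.1) hCL (hsize' ▸ hCM) hconcat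
    rw [concatListP_injective L M hL' hM' (Prod.ext hsize' htail), Prod.ext hp₁ hp₂]

end factorization

/-! ### The `q` basis -/

lemma mem_SPs {n : ℕ} {P : Finset (Finset ℕ) → Prop} {A : Finset (Finset ℕ)} :
    A ∈ SPs n P ↔ IsSetPartition n A ∧ P A := by
  rw [SPs, mem_filter, and_iff_right_iff_imp]
  exact fun h => mem_powerset.mpr fun b hb => mem_powerset.mpr (h.1.subset_ground hb)

lemma SPs_zero_leStar_empty : SPs 0 (fun B => leStar ∅ B) = {∅} := by
  ext A
  rw [mem_SPs, mem_singleton]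
  refine ⟨fun h => h.1.eq_empty_of_zero, ?_⟩
  rintro rfl
  exact ⟨isSetPartition_zero_empty, .refl⟩

lemma SPs_meetP_eq_filter {n k : ℕ} {A B A' B' : Finset (Finset ℕ)} (hA : IsSetPartition n A)
    (hB : IsSetPartition k B) (hA' : A' ∈ SPs n fun X => leStar A X)
    (hB' : B' ∈ SPs k fun X => leStar B X) :
    SPs (n + k) (fun C => meetP C (concatP n (onePartP n) (onePartP k)) = concatP n A' B') =
      (SPs (n + k) fun C => leStar (concatP n A B) C).filter
        fun C => (restrictP C (ground n), upperP n C) = (A', B') := by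
  obtain ⟨hA', hAA'⟩ := mem_SPs.mp hA'
  obtain ⟨hB', hBB'⟩ := mem_SPs.mp hB'
  ext C
  rw [mem_filter, mem_SPs, mem_SPs, Prod.mk.injEq]
  constructor
  · rintro ⟨hC, hmeet⟩
    obtain ⟨h₁, h₂⟩ := (meetP_concatP_onePartP_eq_iff hA' hB' hC).mp hmeet
    exact ⟨⟨hC, (leStar_concatP_iff hA hB hC).mpr ⟨h₁ ▸ hAA', h₂ ▸ hBB'⟩⟩, h₁, h₂⟩
  · rintro ⟨⟨hC, -⟩, h⟩
    exact ⟨hC, (meetP_concatP_onePartP_eq_iff hA' hB' hC).mpr h⟩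

section Algebra

variable {R : Type*} [Semiring R] (m : ℕ → Finset (Finset ℕ) → R)

def MonomialProductRule : Prop :=
  ∀ n k A B, IsSetPartition n A → IsSetPartition k B →
    m n A * m k B =
      ∑ C ∈ SPs (n + k) (fun C => meetP C (concatP n (onePartP n) (onePartP k)) = concatP n A B),
        m (n + k) C

def qP (n : ℕ) (A : Finset (Finset ℕ)) : R := ∑ B ∈ SPs n (fun B => leStar A B), m n B

variable {m}

lemma qP_concatP (hmul : MonomialProductRule m) {n k : ℕ} {A B : Finset (Finset ℕ)}
    (hA : IsSetPartition n A) (hB : IsSetPartition k B) :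
    qP m n A * qP m k B = qP m (n + k) (concatP n A B) := by
  calc qP m n A * qP m k B
      = ∑ A' ∈ SPs n (fun X => leStar A X), ∑ B' ∈ SPs k (fun X => leStar B X),
          m n A' * m k B' := sum_mul_sum _ _ _ _
    _ = ∑ A' ∈ SPs n (fun X => leStar A X), ∑ B' ∈ SPs k (fun X => leStar B X),
          ∑ C ∈ (SPs (n + k) fun C => leStar (concatP n A B) C).filter
            (fun C => (restrictP C (ground n), upperP n C) = (A', B')), m (n + k) C := by
        refine sum_congr rfl fun A' hA' => sum_congr rfl fun B' hB' => ?_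
        rw [hmul n k A' B' (mem_SPs.mp hA').1 (mem_SPs.mp hB').1,
          SPs_meetP_eq_filter hA hB hA' hB']
    _ = ∑ p ∈ SPs n (fun X => leStar A X) ×ˢ SPs k (fun X => leStar B X),
          ∑ C ∈ (SPs (n + k) fun C => leStar (concatP n A B) C).filter
            (fun C => (restrictP C (ground n), upperP n C) = p), m (n + k) C := by
        rw [sum_product]
    _ = qP m (n + k) (concatP n A B) := by
        refine sum_fiberwise_of_maps_to (fun C hC => ?_) _
        obtain ⟨hC, hle⟩ := mem_SPs.mp hC
        obtain ⟨h₁, h₂⟩ := (leStar_concatP_iff hA hB hC).mp hle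
        exact mem_product.mpr ⟨mem_SPs.mpr ⟨isSetPartition_restrictP_ground hC, h₁⟩,
          mem_SPs.mpr ⟨isSetPartition_upperP hC, h₂⟩⟩

lemma qP_concatListP (hone : m 0 ∅ = 1) (hmul : MonomialProductRule m) :
    ∀ L : List (ℕ × Finset (Finset ℕ)), (∀ p ∈ L, IsSetPartition p.1 p.2) →
      qP m (concatListP L).1 (concatListP L).2 = (L.map fun p => qP m p.1 p.2).prod
  | [], _ => by
    rw [List.map_nil, List.prod_nil]
    exact (sum_congr SPs_zero_leStar_empty fun _ _ => rfl).trans ((sum_singleton _ _).trans hone)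
  | p :: L, h => by
    have hL : ∀ q ∈ L, IsSetPartition q.1 q.2 := fun q hq => h q (List.mem_cons_of_mem _ hq)
    rw [List.map_cons, List.prod_cons, ← qP_concatListP hone hmul L hL,
      qP_concatP hmul (h p List.mem_cons_self) (isSetPartition_concatListP L hL), concatListP,
      add_comm]

lemma qP_eq_prod_of_atomicFactorization (hone : m 0 ∅ = 1) (hmul : MonomialProductRule m)
    {n : ℕ} {A : Finset (Finset ℕ)} {L : List (ℕ × Finset (Finset ℕ))}
    (hL : AtomicFactorization n A L) : qP m n A = (L.map fun p => qP m p.1 p.2).prod := by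
  obtain ⟨hatoms, hconcat⟩ := hL
  rw [← qP_concatListP hone hmul L fun p hp => (hatoms p hp).1, hconcat]

end Algebra

/-! ### Unitriangular changes of basis -/

namespace Module.Basis

variable {ι K M : Type*} [Ring K] [AddCommGroup M] [Module K M] (b : Basis ι K M)
  {U : ι → Finset ι} {f : ι → ℕ}

lemma repr_sum_self_apply (s : Finset ι) (i : ι) :
    b.repr (∑ j ∈ s, b j) i = if i ∈ s then 1 else 0 := by
  simp [map_sum, Finsupp.finsetSum_apply, Finsupp.single_apply]

lemma linearIndependent_sum_of_unitriangular (hself : ∀ i, i ∈ U i)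
    (hlt : ∀ i, ∀ j ∈ U i, j ≠ i → f j < f i) :
    LinearIndependent K fun i => ∑ j ∈ U i, b j := by
  rw [linearIndependent_iff]
  intro l hl
  by_contra hne
  obtain ⟨i₀, hi₀, hmax⟩ := l.support.exists_max_image f (Finsupp.support_nonempty_iff.mpr hne)
  have hcoef : ∀ i ∈ l.support, b.repr (∑ j ∈ U i, b j) i₀ = if i = i₀ then 1 else 0 := by
    intro i hi
    rw [repr_sum_self_apply]
    by_cases hi₀i : i = i₀
    · simp [hi₀i, hself]
    · have : i₀ ∉ U i := fun h => (hmax i hi).not_gt (hlt i i₀ h (Ne.symm hi₀i))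
      simp [hi₀i, this]
  have hterm : ∀ i ∈ l.support, b.repr (l i • ∑ j ∈ U i, b j) i₀ = if i = i₀ then l i else 0 :=
    fun i hi => by rw [map_smul, Finsupp.smul_apply, hcoef i hi, smul_eq_mul, mul_ite, mul_one,
      mul_zero]
  have := congrArg (fun x => b.repr x i₀) hl
  simp only [Finsupp.linearCombination_apply, Finsupp.sum, map_sum, Finsupp.finsetSum_apply] at this
  rw [sum_congr rfl hterm, sum_ite_eq', if_pos hi₀, map_zero, Finsupp.coe_zero,
    Pi.zero_apply] at this
  exact Finsupp.mem_support_iff.mp hi₀ this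

lemma span_sum_of_unitriangular (hself : ∀ i, i ∈ U i)
    (hlt : ∀ i, ∀ j ∈ U i, j ≠ i → f j < f i) :
    Submodule.span K (Set.range fun i => ∑ j ∈ U i, b j) = ⊤ := by
  refine eq_top_iff.mpr (b.span_eq ▸ Submodule.span_le.mpr ?_)
  rintro _ ⟨i, rfl⟩
  induction hfi : f i using Nat.strong_induction_on generalizing i with
  | _ N ih =>
  have hbi : b i = ∑ j ∈ U i, b j - ∑ j ∈ (U i).erase i, b j := by
    rw [← add_sum_erase _ _ (hself i), add_sub_cancel_right]
  rw [SetLike.mem_coe, hbi]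
  refine Submodule.sub_mem _ (Submodule.subset_span ⟨i, rfl⟩) (Submodule.sum_mem _ fun j hj => ?_)
  obtain ⟨hji, hj⟩ := mem_erase.mp hj
  exact ih (f j) (hfi ▸ hlt i j hj hji) j rfl

noncomputable def unitriangular (hself : ∀ i, i ∈ U i)
    (hlt : ∀ i, ∀ j ∈ U i, j ≠ i → f j < f i) : Basis ι K M :=
  .mk (b.linearIndependent_sum_of_unitriangular hself hlt)
    (b.span_sum_of_unitriangular hself hlt).ge

lemma unitriangular_apply (hself : ∀ i, i ∈ U i) (hlt : ∀ i, ∀ j ∈ U i, j ≠ i → f j < f i)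
    (i : ι) : b.unitriangular hself hlt i = ∑ j ∈ U i, b j :=
  mk_apply _ _ _

lemma bijective_of_apply_eq {ι' M' : Type*} [AddCommGroup M'] [Module K M']
    (b' : Basis ι' K M') (e : ι ≃ ι') (g : M →ₗ[K] M') (h : ∀ i, g (b i) = b' (e i)) :
    Function.Bijective g := by
  have : g = (b.equiv b' e).toLinearMap := b.ext fun i => by simp [h]
  exact this ▸ (b.equiv b' e).bijective

end Module.Basis

theorem FreeAlgebra.basisFreeMonoid_apply (R X : Type*) [CommSemiring R] (w : FreeMonoid X) :
    FreeAlgebra.basisFreeMonoid R X w = FreeMonoid.lift (FreeAlgebra.ι R) w := by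
  simp [FreeAlgebra.basisFreeMonoid, FreeAlgebra.equivMonoidAlgebraFreeMonoid]

/-! ### Free generation by the atomic `q`'s -/

def upSet (i : SPIdx) : Finset SPIdx :=
  ((SPs i.1.1 fun B => leStar i.1.2 B).image (Prod.mk i.1.1)).subtype
    fun x => IsSetPartition x.1 x.2

lemma mem_upSet {i j : SPIdx} : j ∈ upSet i ↔ j.1.1 = i.1.1 ∧ leStar i.1.2 j.1.2 := by
  obtain ⟨⟨n, A⟩, hA⟩ := i
  obtain ⟨⟨k, B⟩, hB⟩ := j
  simp only [upSet, mem_subtype, mem_image, mem_SPs, Prod.mk.injEq]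
  constructor
  · rintro ⟨C, ⟨-, hC⟩, rfl, rfl⟩
    exact ⟨rfl, hC⟩
  · rintro ⟨rfl, h⟩
    exact ⟨B, ⟨hB, h⟩, rfl, rfl⟩

lemma upSet_card_lt {i j : SPIdx} (hj : j ∈ upSet i) (hji : j ≠ i) :
    j.1.2.card < i.1.2.card := by
  obtain ⟨hsize, hle⟩ := mem_upSet.mp hj
  exact hle.eq_or_card_lt.resolve_left fun h => hji (Subtype.ext (Prod.ext hsize h))

lemma qP_eq_sum_upSet {R : Type*} [Semiring R] (m : ℕ → Finset (Finset ℕ) → R) (i : SPIdx) :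
    qP m i.1.1 i.1.2 = ∑ j ∈ upSet i, m j.1.1 j.1.2 := by
  rw [qP, upSet, sum_subtype_of_mem (fun x : ℕ × Finset (Finset ℕ) => m x.1 x.2) fun x hx => by
      obtain ⟨B, hB, rfl⟩ := mem_image.mp hx
      exact (mem_SPs.mp hB).1,
    sum_image (Prod.mk_right_injective _).injOn]

def concatAtoms (L : List AtomIdx) : SPIdx :=
  ⟨concatListP (L.map Subtype.val), isSetPartition_concatListP _ fun p hp => by
    obtain ⟨a, -, rfl⟩ := List.mem_map.mp hp
    exact a.2.1⟩

lemma concatAtoms_bijective : Function.Bijective concatAtoms := by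
  have hatoms : ∀ L : List AtomIdx, ∀ p ∈ L.map Subtype.val, AtomicP p.1 p.2 := fun L p hp => by
    obtain ⟨a, -, rfl⟩ := List.mem_map.mp hp
    exact a.2
  refine ⟨fun L M h => ?_, fun ⟨⟨n, A⟩, hA⟩ => ?_⟩
  · exact List.map_injective_iff.mpr Subtype.val_injective
      (concatListP_injective _ _ (hatoms L) (hatoms M) (congrArg Subtype.val h))
  · obtain ⟨L, hL, hconcat⟩ := exists_atomicFactorization n A hA
    refine ⟨L.pmap Subtype.mk hL, Subtype.ext ?_⟩
    simp [concatAtoms, List.map_pmap, hconcat]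

lemma qP_concatAtoms {R : Type*} [Semiring R] {m : ℕ → Finset (Finset ℕ) → R}
    (hone : m 0 ∅ = 1) (hmul : MonomialProductRule m) (L : List AtomIdx) :
    qP m (concatAtoms L).1.1 (concatAtoms L).1.2 = (L.map fun a => qP m a.1.1 a.1.2).prod := by
  rw [concatAtoms, qP_concatListP hone hmul _ fun p hp => ?_, List.map_map]
  · rfl
  · obtain ⟨a, -, rfl⟩ := List.mem_map.mp hp
    exact a.2.1

/-- in `NCSym` (any algebra with basis `m` satisfying the monomial product
rule) the basis `q_A = ∑_{B ≥_* A} m_B` is multiplicative on atomic factorizations: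
if `A^! = (A^{(1)}, …, A^{(k)})` then `q_A = q_{A^{(1)}} ⋯ q_{A^{(k)}}`; consequently
`NCSym` is freely generated by `{q_A : A atomic}`. -/
theorem q_basis_multiplicative_free {R : Type*} [Ring R] [Algebra ℚ R]
    (m : ℕ → Finset (Finset ℕ) → R)
    (hone : m 0 ∅ = 1)
    (hmul : ∀ n k A B, IsSetPartition n A → IsSetPartition k B →
      m n A * m k B =
        ∑ C ∈ SPs (n + k)
            (fun C => meetP C (concatP n (onePartP n) (onePartP k)) = concatP n A B),
          m (n + k) C)
    (hli : LinearIndependent ℚ (fun i : SPIdx => m i.1.1 i.1.2))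
    (hspan : Submodule.span ℚ (Set.range fun i : SPIdx => m i.1.1 i.1.2) = ⊤) :
    (∀ (n : ℕ) (A : Finset (Finset ℕ)) (L : List (ℕ × Finset (Finset ℕ))),
      IsSetPartition n A → AtomicFactorization n A L →
      ∑ B ∈ SPs n (fun B => leStar A B), m n B =
        (L.map fun p => ∑ B ∈ SPs p.1 (fun B => leStar p.2 B), m p.1 B).prod) ∧
    Function.Bijective
      ⇑(FreeAlgebra.lift ℚ
        (fun a : AtomIdx => ∑ B ∈ SPs a.1.1 (fun B => leStar a.1.2 B), m a.1.1 B) :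
          FreeAlgebra ℚ AtomIdx →ₐ[ℚ] R) := by
  refine ⟨fun n A L _ hL => qP_eq_prod_of_atomicFactorization hone hmul hL, ?_⟩
  let mBasis : Module.Basis SPIdx ℚ R := .mk hli hspan.ge
  let qBasis := mBasis.unitriangular (U := upSet) (f := fun i => i.1.2.card)
    (fun i => mem_upSet.mpr ⟨rfl, .refl⟩) fun _ _ => upSet_card_lt
  refine (FreeAlgebra.basisFreeMonoid ℚ AtomIdx).bijective_of_apply_eq qBasis
    (FreeMonoid.toList.trans (.ofBijective _ concatAtoms_bijective)) (AlgHom.toLinearMap _)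
    fun w => ?_
  simp only [AlgHom.toLinearMap_apply, FreeAlgebra.basisFreeMonoid_apply, FreeMonoid.lift_apply,
    map_list_prod, List.map_map, Function.comp_def, FreeAlgebra.lift_ι_apply, qBasis,
    Module.Basis.unitriangular_apply, mBasis, Module.Basis.mk_apply, ← qP_eq_sum_upSet]
  exact (qP_concatAtoms hone hmul _).symm

end
end

section
/- If A ≤_* B are set partitions of [n], then for every subset S ⊆ [n], st(A↓_S) ≤_* st(B↓_S). -/
open scoped Classical
noncomputable section

/-! ### Auxiliary lemmas for Statement 12 -/

lemma stMap_lt_stMap {S : Finset ℕ} {x y : ℕ} (hy : y ∈ S) (hxy : x < y) :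
    stMap S x < stMap S y := by
  apply Finset.card_lt_card
  constructor
  · intro z hz
    simp only [Finset.mem_filter] at hz ⊢
    exact ⟨hz.1, le_trans hz.2 hxy.le⟩
  · intro hsub
    have hyy : y ∈ S.filter (· ≤ y) := by simp [hy]
    have := hsub hyy
    simp only [Finset.mem_filter] at this
    omega

lemma stMap_injOn {S : Finset ℕ} {x y : ℕ} (hx : x ∈ S) (hy : y ∈ S)
    (h : stMap S x = stMap S y) : x = y := by
  rcases lt_trichotomy x y with hlt | heq | hlt
  · exact absurd h (stMap_lt_stMap hy hlt).ne
  · exact heq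
  · exact absurd h.symm (stMap_lt_stMap hx hlt).ne

lemma mem_restrictP {A : Finset (Finset ℕ)} {S : Finset ℕ} {t : Finset ℕ} :
    t ∈ restrictP A S ↔ (∃ b ∈ A, b ∩ S = t) ∧ t.Nonempty := by
  simp [restrictP]

lemma coverStar_sup {A B : Finset (Finset ℕ)} (h : coverStar A B) :
    B.sup id = A.sup id := by
  obtain ⟨a, ha, a', ha', hne, _, rfl⟩ := h
  ext x
  simp only [Finset.mem_sup, id_eq, Finset.mem_insert, Finset.mem_erase]
  constructor
  · rintro ⟨b, hb | ⟨hb1, hb2, hb3⟩, hx⟩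
    · rcases Finset.mem_union.mp (hb ▸ hx) with hx' | hx'
      · exact ⟨a, ha, hx'⟩
      · exact ⟨a', ha', hx'⟩
    · exact ⟨b, hb3, hx⟩
  · rintro ⟨c, hc, hx⟩
    by_cases h1 : c = a
    · exact ⟨a ∪ a', Or.inl rfl, Finset.mem_union_left _ (h1 ▸ hx)⟩
    by_cases h2 : c = a'
    · exact ⟨a ∪ a', Or.inl rfl, Finset.mem_union_right _ (h2 ▸ hx)⟩
    · exact ⟨c, Or.inr ⟨h2, h1, hc⟩, hx⟩

lemma coverStar_isSetPartition {n : ℕ} {A B : Finset (Finset ℕ)}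
    (h : coverStar A B) (hA : IsSetPartition n A) : IsSetPartition n B := by
  have hsup : B.sup id = A.sup id := coverStar_sup h
  obtain ⟨a, ha, a', ha', hne, _, rfl⟩ := h
  refine ⟨?_, ?_, hsup.trans hA.2.2⟩
  · intro b hb
    rcases Finset.mem_insert.mp hb with rfl | hb
    · obtain ⟨x, hx⟩ := hA.1 a ha
      exact ⟨x, Finset.mem_union_left _ hx⟩
    · exact hA.1 b (Finset.mem_of_mem_erase (Finset.mem_of_mem_erase hb))
  · intro b hb c hc hbc
    rcases Finset.mem_insert.mp hb with rfl | hb <;>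
      rcases Finset.mem_insert.mp hc with rfl | hc
    · exact absurd rfl hbc
    · obtain ⟨hc2', hc1⟩ := Finset.mem_erase.mp hc
      obtain ⟨hc3', hc3⟩ := Finset.mem_erase.mp hc1
      refine Finset.disjoint_union_left.mpr
        ⟨hA.2.1 a ha c hc3 (fun he => hc3' he.symm), hA.2.1 a' ha' c hc3 (fun he => hc2' he.symm)⟩
    · obtain ⟨hb2', hb1⟩ := Finset.mem_erase.mp hb
      obtain ⟨hb3', hb3⟩ := Finset.mem_erase.mp hb1
      exact (Finset.disjoint_union_left.mpr
        ⟨hA.2.1 a ha b hb3 (fun he => hb3' he.symm), hA.2.1 a' ha' b hb3 (fun he => hb2' he.symm)⟩).symm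
    · exact hA.2.1 b (Finset.mem_of_mem_erase (Finset.mem_of_mem_erase hb))
        c (Finset.mem_of_mem_erase (Finset.mem_of_mem_erase hc)) hbc

lemma leStar_isSetPartition {n : ℕ} {A B : Finset (Finset ℕ)}
    (h : leStar A B) (hA : IsSetPartition n A) : IsSetPartition n B := by
  induction h with
  | refl => exact hA
  | tail _ hc ih => exact coverStar_isSetPartition hc ih

lemma restrictP_sup {n : ℕ} {A : Finset (Finset ℕ)} {S : Finset ℕ}
    (hA : IsSetPartition n A) (hS : S ⊆ ground n) :
    (restrictP A S).sup id = S := by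
  ext x
  simp only [Finset.mem_sup, id_eq]
  constructor
  · rintro ⟨t, ht, hx⟩
    obtain ⟨⟨b, _, rfl⟩, _⟩ := mem_restrictP.mp ht
    exact (Finset.mem_inter.mp hx).2
  · intro hx
    have hxg : x ∈ A.sup id := hA.2.2 ▸ hS hx
    obtain ⟨b, hb, hxb⟩ := Finset.mem_sup.mp hxg
    refine ⟨b ∩ S, mem_restrictP.mpr ⟨⟨b, hb, rfl⟩, ⟨x, Finset.mem_inter.mpr ⟨hxb, hx⟩⟩⟩,
      Finset.mem_inter.mpr ⟨hxb, hx⟩⟩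

lemma restrictP_disjoint {n : ℕ} {A : Finset (Finset ℕ)} {S : Finset ℕ}
    (hA : IsSetPartition n A) {t u : Finset ℕ}
    (ht : t ∈ restrictP A S) (hu : u ∈ restrictP A S) (hne : t ≠ u) :
    Disjoint t u := by
  obtain ⟨⟨b, hb, rfl⟩, _⟩ := mem_restrictP.mp ht
  obtain ⟨⟨c, hc, rfl⟩, _⟩ := mem_restrictP.mp hu
  have hbc : b ≠ c := fun h => hne (by rw [h])
  exact (hA.2.1 b hb c hc hbc).mono Finset.inter_subset_left Finset.inter_subset_left

lemma restrictP_subset {A : Finset (Finset ℕ)} {S t : Finset ℕ}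
    (ht : t ∈ restrictP A S) : t ⊆ S := by
  obtain ⟨⟨b, _, rfl⟩, _⟩ := mem_restrictP.mp ht
  exact Finset.inter_subset_right

lemma ne_of_disjoint_nonempty {t u : Finset ℕ} (h : Disjoint t u) (ht : t.Nonempty) :
    t ≠ u := by
  rintro rfl
  exact ht.ne_empty (by simpa using disjoint_self.mp h)

lemma image_stMap_disjoint {S t u : Finset ℕ} (h : Disjoint t u)
    (ht : t ⊆ S) (hu : u ⊆ S) :
    Disjoint (t.image (stMap S)) (u.image (stMap S)) := by
  rw [Finset.disjoint_left]
  rintro z hz hz'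
  obtain ⟨x, hx, rfl⟩ := Finset.mem_image.mp hz
  obtain ⟨y, hy, hxy⟩ := Finset.mem_image.mp hz'
  have := stMap_injOn (hu hy) (ht hx) hxy
  subst this
  exact Finset.disjoint_left.mp h hx hy

/-- The key step: a single `coverStar` step restricts. -/
lemma coverStar_restrict {n : ℕ} {A B : Finset (Finset ℕ)} {S : Finset ℕ}
    (hA : IsSetPartition n A) (hS : S ⊆ ground n) (hc : coverStar A B) :
    leStar (stdP (restrictP A S)) (stdP (restrictP B S)) := by
  have hB : IsSetPartition n B := coverStar_isSetPartition hc hA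
  have hPsup : (restrictP A S).sup id = S := restrictP_sup hA hS
  have hQsup : (restrictP B S).sup id = S := restrictP_sup hB hS
  obtain ⟨a, ha, a', ha', hne, hlt, hBdef⟩ := hc
  set u := a ∩ S with hu_def
  set v := a' ∩ S with hv_def
  have haa' : Disjoint a a' := hA.2.1 a ha a' ha' hne
  have hUnionInter : (a ∪ a') ∩ S = u ∪ v := Finset.union_inter_distrib_right a a' S
  by_cases hu : u.Nonempty
  · by_cases hv : v.Nonempty
    · -- both nonempty: a genuine cover step
      have husub : u ⊆ S := by rw [hu_def]; exact Finset.inter_subset_right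
      have hvsub : v ⊆ S := by rw [hv_def]; exact Finset.inter_subset_right
      have huv_disj : Disjoint u v := by
        rw [hu_def, hv_def]
        exact haa'.mono Finset.inter_subset_left Finset.inter_subset_left
      have hu_mem : u ∈ restrictP A S := mem_restrictP.mpr ⟨⟨a, ha, hu_def.symm⟩, hu⟩
      have hv_mem : v ∈ restrictP A S := mem_restrictP.mpr ⟨⟨a', ha', hv_def.symm⟩, hv⟩
      have huv_ne : u ≠ v := ne_of_disjoint_nonempty huv_disj hu
      have hQ : restrictP B S = insert (u ∪ v) (((restrictP A S).erase u).erase v) := by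
        ext t
        rw [hBdef, mem_restrictP]
        constructor
        · rintro ⟨⟨b, hb, rfl⟩, hne'⟩
          rcases Finset.mem_insert.mp hb with rfl | hb'
          · exact Finset.mem_insert.mpr (Or.inl hUnionInter)
          · obtain ⟨hb2', hb1⟩ := Finset.mem_erase.mp hb'
            obtain ⟨hb3', hb3⟩ := Finset.mem_erase.mp hb1
            refine Finset.mem_insert.mpr (Or.inr (Finset.mem_erase.mpr ⟨?_,
              Finset.mem_erase.mpr ⟨?_, mem_restrictP.mpr ⟨⟨b, hb3, rfl⟩, hne'⟩⟩⟩))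
            · refine ne_of_disjoint_nonempty ?_ hne'
              rw [hv_def]
              exact (hA.2.1 b hb3 a' ha' hb2').mono Finset.inter_subset_left
                Finset.inter_subset_left
            · refine ne_of_disjoint_nonempty ?_ hne'
              rw [hu_def]
              exact (hA.2.1 b hb3 a ha hb3').mono Finset.inter_subset_left
                Finset.inter_subset_left
        · intro ht
          rcases Finset.mem_insert.mp ht with rfl | ht'
          · obtain ⟨x, hx⟩ := hu
            exact ⟨⟨a ∪ a', Finset.mem_insert_self _ _, hUnionInter⟩,
              ⟨x, Finset.mem_union_left _ hx⟩⟩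
          · obtain ⟨htv, ht2⟩ := Finset.mem_erase.mp ht'
            obtain ⟨htu, htP⟩ := Finset.mem_erase.mp ht2
            obtain ⟨⟨c, hcA, rfl⟩, hne'⟩ := mem_restrictP.mp htP
            have h1 : c ≠ a := fun h => htu (by rw [h, ← hu_def])
            have h2 : c ≠ a' := fun h => htv (by rw [h, ← hv_def])
            exact ⟨⟨c, Finset.mem_insert_of_mem
              (Finset.mem_erase.mpr ⟨h2, Finset.mem_erase.mpr ⟨h1, hcA⟩⟩), rfl⟩, hne'⟩
      have hFinj : ∀ t ∈ restrictP A S, ∀ t' ∈ restrictP A S,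
          t.image (stMap S) = t'.image (stMap S) → t = t' := by
        intro t ht t' ht' hFt
        by_contra hne'
        have hdis := image_stMap_disjoint (restrictP_disjoint hA ht ht' hne')
          (restrictP_subset ht) (restrictP_subset ht')
        rw [hFt] at hdis
        exact ((mem_restrictP.mp ht').2.image (stMap S)).ne_empty
          (by simpa using disjoint_self.mp hdis)
      have hstdA : stdP (restrictP A S)
          = (restrictP A S).image (fun b => b.image (stMap S)) := by
        simp only [stdP, hPsup]
      have hstdB : stdP (restrictP B S)
          = (restrictP B S).image (fun b => b.image (stMap S)) := by
        simp only [stdP, hQsup]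
      refine Relation.ReflTransGen.single ?_
      rw [hstdA, hstdB]
      refine ⟨u.image (stMap S), Finset.mem_image_of_mem _ hu_mem,
        v.image (stMap S), Finset.mem_image_of_mem _ hv_mem, ?_, ?_, ?_⟩
      · exact fun h => huv_ne (hFinj u hu_mem v hv_mem h)
      · rintro x hx y hy
        obtain ⟨x0, hx0, rfl⟩ := Finset.mem_image.mp hx
        obtain ⟨y0, hy0, rfl⟩ := Finset.mem_image.mp hy
        rw [hu_def] at hx0
        rw [hv_def] at hy0
        exact stMap_lt_stMap (Finset.mem_inter.mp hy0).2
          (hlt x0 (Finset.mem_inter.mp hx0).1 y0 (Finset.mem_inter.mp hy0).1)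
      · rw [hQ]
        ext z
        constructor
        · intro hz
          obtain ⟨t, ht, rfl⟩ := Finset.mem_image.mp hz
          rcases Finset.mem_insert.mp ht with rfl | ht'
          · exact Finset.mem_insert.mpr (Or.inl (Finset.image_union _ _))
          · obtain ⟨htv, ht2⟩ := Finset.mem_erase.mp ht'
            obtain ⟨htu, htP⟩ := Finset.mem_erase.mp ht2
            refine Finset.mem_insert.mpr (Or.inr (Finset.mem_erase.mpr ⟨?_,
              Finset.mem_erase.mpr ⟨?_, Finset.mem_image_of_mem _ htP⟩⟩))
            · exact fun h => htv (hFinj t htP v hv_mem h)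
            · exact fun h => htu (hFinj t htP u hu_mem h)
        · intro hz
          rcases Finset.mem_insert.mp hz with rfl | hz'
          · exact Finset.mem_image.mpr ⟨u ∪ v, Finset.mem_insert_self _ _,
              Finset.image_union _ _⟩
          · obtain ⟨hzv, hz2⟩ := Finset.mem_erase.mp hz'
            obtain ⟨hzu, hzX⟩ := Finset.mem_erase.mp hz2
            obtain ⟨t, htP, rfl⟩ := Finset.mem_image.mp hzX
            exact Finset.mem_image.mpr ⟨t, Finset.mem_insert_of_mem
              (Finset.mem_erase.mpr ⟨fun h => hzv (by rw [h]),
                Finset.mem_erase.mpr ⟨fun h => hzu (by rw [h]), htP⟩⟩), rfl⟩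
    · -- v empty
      have hveq : v = ∅ := Finset.not_nonempty_iff_eq_empty.mp hv
      have hresteq : restrictP B S = restrictP A S := by
        ext t
        rw [mem_restrictP, mem_restrictP, hBdef]
        constructor
        · rintro ⟨⟨b, hb, rfl⟩, hne'⟩
          rcases Finset.mem_insert.mp hb with rfl | hb
          · exact ⟨⟨a, ha, by rw [hUnionInter, hveq, Finset.union_empty]⟩, hne'⟩
          · exact ⟨⟨b, Finset.mem_of_mem_erase (Finset.mem_of_mem_erase hb), rfl⟩, hne'⟩
        · rintro ⟨⟨c, hcA, rfl⟩, hne'⟩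
          by_cases h1 : c = a
          · exact ⟨⟨a ∪ a', Finset.mem_insert_self _ _,
              by rw [hUnionInter, hveq, Finset.union_empty, hu_def, h1]⟩, hne'⟩
          by_cases h2 : c = a'
          · exact absurd hne' (by rw [h2, ← hv_def]; exact hv)
          · exact ⟨⟨c, Finset.mem_insert_of_mem
              (Finset.mem_erase.mpr ⟨h2, Finset.mem_erase.mpr ⟨h1, hcA⟩⟩), rfl⟩, hne'⟩
      rw [hresteq]
      exact Relation.ReflTransGen.refl
  · -- u empty
    have hueq : u = ∅ := Finset.not_nonempty_iff_eq_empty.mp hu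
    have hresteq : restrictP B S = restrictP A S := by
      ext t
      rw [mem_restrictP, mem_restrictP, hBdef]
      constructor
      · rintro ⟨⟨b, hb, rfl⟩, hne'⟩
        rcases Finset.mem_insert.mp hb with rfl | hb
        · exact ⟨⟨a', ha', by rw [hUnionInter, hueq, Finset.empty_union]⟩, hne'⟩
        · exact ⟨⟨b, Finset.mem_of_mem_erase (Finset.mem_of_mem_erase hb), rfl⟩, hne'⟩
      · rintro ⟨⟨c, hcA, rfl⟩, hne'⟩
        by_cases h1 : c = a
        · exact absurd hne' (by rw [h1, ← hu_def]; exact hu)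
        by_cases h2 : c = a'
        · exact ⟨⟨a ∪ a', Finset.mem_insert_self _ _,
            by rw [hUnionInter, hueq, Finset.empty_union, hv_def, h2]⟩, hne'⟩
        · exact ⟨⟨c, Finset.mem_insert_of_mem
            (Finset.mem_erase.mpr ⟨h2, Finset.mem_erase.mpr ⟨h1, hcA⟩⟩), rfl⟩, hne'⟩
    rw [hresteq]
    exact Relation.ReflTransGen.refl

/-- if `A ≤_* B` are set partitions of `[n]`, then for every `S ⊆ [n]`,
`st(A↓_S) ≤_* st(B↓_S)`. -/
theorem leStar_restrict (n : ℕ) (A B : Finset (Finset ℕ)) (S : Finset ℕ)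
    (hA : IsSetPartition n A) (hB : IsSetPartition n B) (hS : S ⊆ ground n)
    (h : leStar A B) :
    leStar (stdP (restrictP A S)) (stdP (restrictP B S)) := by
  clear hB
  induction h with
  | refl => exact Relation.ReflTransGen.refl
  | tail h' hc ih =>
      exact Relation.ReflTransGen.trans ih
        (coverStar_restrict (leStar_isSetPartition h' hA) hS hc)

end
end

section
/- If A ≤_* B are set partitions of [n] and C ≤_* D are set partitions of [m], then A|C ≤_* B|D as set partitions of [n+m]. -/
open scoped Classical
noncomputable section

lemma coverStar_union_left {A B S : Finset (Finset ℕ)} (h : coverStar A B)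
    (hAS : ∀ a ∈ A, a ∉ S) : coverStar (A ∪ S) (B ∪ S) := by
  obtain ⟨a, ha, a', ha', hne, hlt, rfl⟩ := h
  refine ⟨a, Finset.mem_union_left _ ha, a', Finset.mem_union_left _ ha', hne, hlt, ?_⟩
  rw [Finset.insert_union, Finset.erase_union_distrib, Finset.erase_union_distrib,
    Finset.erase_eq_of_notMem (hAS a ha),
    Finset.erase_eq_of_notMem (hAS a' ha')]

lemma coverStar_shift (n : ℕ) {C D : Finset (Finset ℕ)} (h : coverStar C D) :
    coverStar (shiftP n C) (shiftP n D) := by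
  have hf : Function.Injective (· + n : ℕ → ℕ) := add_left_injective n
  have hF : Function.Injective (fun s : Finset ℕ => s.image (· + n)) :=
    Finset.image_injective hf
  obtain ⟨a, ha, a', ha', hne, hlt, rfl⟩ := h
  refine ⟨a.image (· + n), Finset.mem_image_of_mem _ ha,
    a'.image (· + n), Finset.mem_image_of_mem _ ha',
    fun hcon => hne (hF hcon), ?_, ?_⟩
  · intro x hx y hy
    obtain ⟨u, hu, rfl⟩ := Finset.mem_image.1 hx
    obtain ⟨v, hv, rfl⟩ := Finset.mem_image.1 hy
    exact Nat.add_lt_add_right (hlt u hu v hv) n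
  · show (insert (a ∪ a') ((C.erase a).erase a')).image _ = _
    rw [Finset.image_insert, Finset.image_union,
      Finset.image_erase hF, Finset.image_erase hF]
    rfl

lemma leStar_union_left (n : ℕ) (S : Finset (Finset ℕ))
    (hS : ∀ s ∈ S, ∃ x ∈ s, n < x) {A B : Finset (Finset ℕ)}
    (h : leStar A B) (hA : ∀ a ∈ A, a ⊆ ground n) :
    leStar (A ∪ S) (B ∪ S) ∧ ∀ b ∈ B, b ⊆ ground n := by
  induction h with
  | refl => exact ⟨Relation.ReflTransGen.refl, hA⟩
  | @tail B' B'' h c ih =>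
    obtain ⟨hl, hsub⟩ := ih
    have hnotin : ∀ a ∈ B', a ∉ S := by
      intro a ha hmem
      obtain ⟨x, hx, hnx⟩ := hS a hmem
      have := hsub a ha hx
      simp only [ground, Finset.mem_Icc] at this
      omega
    refine ⟨hl.tail (coverStar_union_left c hnotin), ?_⟩
    obtain ⟨a, ha, a', ha', hne, hlt, rfl⟩ := c
    intro b hb
    rcases Finset.mem_insert.1 hb with rfl | hb
    · exact Finset.union_subset (hsub a ha) (hsub a' ha')
    · exact hsub b (Finset.mem_of_mem_erase (Finset.mem_of_mem_erase hb))

lemma leStar_union_right (n : ℕ) {B : Finset (Finset ℕ)}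
    (hB : ∀ b ∈ B, b ⊆ ground n) {C D : Finset (Finset ℕ)}
    (h : leStar C D) (hC : ∀ c ∈ C, ∃ x ∈ c, 0 < x) :
    leStar (B ∪ shiftP n C) (B ∪ shiftP n D) ∧ ∀ d ∈ D, ∃ x ∈ d, 0 < x := by
  induction h with
  | refl => exact ⟨Relation.ReflTransGen.refl, hC⟩
  | @tail C' C'' h c ih =>
    obtain ⟨hl, hsub⟩ := ih
    have hnotin : ∀ s ∈ shiftP n C', s ∉ B := by
      intro s hs hmem
      obtain ⟨c, hc, rfl⟩ := Finset.mem_image.1 hs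
      obtain ⟨y, hy, hy0⟩ := hsub c hc
      have hyn : y + n ∈ c.image (· + n) := Finset.mem_image_of_mem _ hy
      have := hB _ hmem hyn
      simp only [ground, Finset.mem_Icc] at this
      omega
    have hc2 := coverStar_shift n c
    have : coverStar (B ∪ shiftP n C') (B ∪ shiftP n C'') := by
      rw [Finset.union_comm B, Finset.union_comm B]
      exact coverStar_union_left hc2 hnotin
    refine ⟨hl.tail this, ?_⟩
    obtain ⟨a, ha, a', ha', hne, hlt, rfl⟩ := c
    intro d hd
    rcases Finset.mem_insert.1 hd with rfl | hd
    · obtain ⟨x, hx, hx0⟩ := hsub a ha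
      exact ⟨x, Finset.mem_union_left _ hx, hx0⟩
    · exact hsub d (Finset.mem_of_mem_erase (Finset.mem_of_mem_erase hd))

/-- if `A ≤_* B` are set partitions of `[n]` and `C ≤_* D` are set
partitions of `[m]`, then `A|C ≤_* B|D`. -/
theorem leStar_concat (n m : ℕ) (A B C D : Finset (Finset ℕ))
    (hA : IsSetPartition n A) (hB : IsSetPartition n B)
    (hC : IsSetPartition m C) (hD : IsSetPartition m D)
    (h1 : leStar A B) (h2 : leStar C D) :
    leStar (concatP n A C) (concatP n B D) := by
  have hAsub : ∀ a ∈ A, a ⊆ ground n := by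
    intro a ha
    have := Finset.le_sup (f := id) ha
    rwa [hA.2.2] at this
  have hCne : ∀ c ∈ C, c.Nonempty := hC.1
  have hCsub : ∀ c ∈ C, c ⊆ ground m := by
    intro c hc
    have := Finset.le_sup (f := id) hc
    rwa [hC.2.2] at this
  have hS : ∀ s ∈ shiftP n C, ∃ x ∈ s, n < x := by
    intro s hs
    obtain ⟨c, hc, rfl⟩ := Finset.mem_image.1 hs
    obtain ⟨y, hy⟩ := hCne c hc
    have h1y : 1 ≤ y := by
      have := hCsub c hc hy
      simp only [ground, Finset.mem_Icc] at this
      omega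
    exact ⟨y + n, Finset.mem_image_of_mem _ hy, by omega⟩
  obtain ⟨step1, hBsub⟩ := leStar_union_left n (shiftP n C) hS h1 hAsub
  have hCpos : ∀ c ∈ C, ∃ x ∈ c, 0 < x := by
    intro c hc
    obtain ⟨y, hy⟩ := hCne c hc
    have := hCsub c hc hy
    simp only [ground, Finset.mem_Icc] at this
    exact ⟨y, hy, by omega⟩
  obtain ⟨step2, _⟩ := leStar_union_right n hBsub h2 hCpos
  exact step1.trans step2

end
end
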